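/- arXiv:1812.08480 — 10 statements merged into one kernel-verified Lean document; each statement's English description precedes it below -/
import Mathlib

section
/- There is a constant C > 0 such that for every n ≥ 2 there exists a deterministic strategy g for the HiddenPermutation problem with n positions that identifies every secret (z,π) ∈ {0,1}^n × S_n within ⌈C·n·log₂ n⌉ queries. -/
/-- The score `f_{z,π}(x)`: the length of the longest common prefix of `x` and `z`
in the order imposed by `π` (positions are 0-indexed, so `π j` for `(j : ℕ) < i`
corresponds to the 1-indexed positions `π(1),…,π(i)`). -/
def score (n : ℕ) (z : Fin n → Bool) (π : Equiv.Perm (Fin n)) (x : Fin n → Bool) : ℕ :=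
  Nat.findGreatest (fun i => ∀ j : Fin n, (j : ℕ) < i → z (π j) = x (π j)) n

/-- The list of scores produced in the first `k` queries when the deterministic
strategy `g` plays against the secret `(z, π)`. -/
def histScores (n : ℕ) (g : List ℕ → Fin n → Bool) (z : Fin n → Bool)
    (π : Equiv.Perm (Fin n)) : ℕ → List ℕ
  | 0 => []
  | k + 1 => histScores n g z π k ++ [score n z π (g (histScores n g z π k))]

/-- `(z, π)` is the unique secret consistent with the guessing history produced by the
deterministic strategy `g` against `(z, π)` in its first `T` queries. -/
def Identifies (n : ℕ) (g : List ℕ → Fin n → Bool) (z : Fin n → Bool)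
    (π : Equiv.Perm (Fin n)) (T : ℕ) : Prop :=
  ∀ (z' : Fin n → Bool) (π' : Equiv.Perm (Fin n)),
    (∀ k < T, score n z' π' (g (histScores n g z π k)) =
        score n z π (g (histScores n g z π k))) →
    z' = z ∧ π' = π

/-! ### Auxiliary definitions for the strategy -/

/-- Recover the element of `Fin n` whose first `K` bits are given by `f`. -/
noncomputable def pick (n K : ℕ) (hn : 0 < n) (f : ℕ → Bool) : Fin n :=
  if h : ∃ q : Fin n, ∀ k, k < K → Nat.testBit (q : ℕ) k = f k then h.choose else ⟨0, hn⟩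

/-- Decoded flag for stage `j`: whether the base query of stage `j` already matched
the secret at position `π j`. -/
def bfn (K : ℕ) (σ : ℕ → ℕ) (j : ℕ) : Bool := decide (j + 1 ≤ σ (j * (K + 1)))

/-- Decoded `k`-th bit of `π j`. -/
def bitfn (K : ℕ) (σ : ℕ → ℕ) (j k : ℕ) : Bool :=
  xor (bfn K σ j) (decide (j + 1 ≤ σ (j * (K + 1) + 1 + k)))

/-- Decoded value of `π j`. -/
noncomputable def pfn (n K : ℕ) (hn : 0 < n) (σ : ℕ → ℕ) (j : ℕ) : Fin n :=
  pick n K hn (fun k => if k < K then bitfn K σ j k else false)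

open Classical in
/-- The query made at time `t`, given the score function `σ` (scores of earlier queries). -/
noncomputable def Qry (n K : ℕ) (hn : 0 < n) (σ : ℕ → ℕ) (t : ℕ) (q : Fin n) : Bool :=
  if (∃ j, j < t / (K + 1) ∧ pfn n K hn σ j = q) then
    decide (∃ j, j < t / (K + 1) ∧ pfn n K hn σ j = q ∧ bfn K σ j = false)
  else if t % (K + 1) = 0 then false else Nat.testBit (q : ℕ) (t % (K + 1) - 1)

/-- The strategy. -/
noncomputable def gfun (n K : ℕ) (hn : 0 < n) : List ℕ → Fin n → Bool :=
  fun l => Qry n K hn (fun m => l.getD m 0) l.length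

/-! ### Basic lemmas -/

lemma pick_eq {n K : ℕ} (hn : 0 < n) (hK : n ≤ 2 ^ K) (f : ℕ → Bool) (q : Fin n)
    (hq : ∀ k, k < K → Nat.testBit (q : ℕ) k = f k) : pick n K hn f = q := by
  have h : ∃ q' : Fin n, ∀ k, k < K → Nat.testBit (q' : ℕ) k = f k := ⟨q, hq⟩
  rw [pick, dif_pos h]
  have hc := h.choose_spec
  apply Fin.ext
  apply Nat.eq_of_testBit_eq
  intro k
  by_cases hk : k < K
  · rw [hc k hk, hq k hk]
  · have hb : ∀ m : Fin n, Nat.testBit (m : ℕ) k = false := fun m =>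
      Nat.testBit_eq_false_of_lt
        (lt_of_lt_of_le m.2 (hK.trans (Nat.pow_le_pow_right (by norm_num) (le_of_not_gt hk))))
    rw [hb, hb]

lemma bfn_congr {K : ℕ} {σ₁ σ₂ : ℕ → ℕ} {j t : ℕ} (hjt : (j + 1) * (K + 1) ≤ t)
    (h : ∀ m, m < t → σ₁ m = σ₂ m) : bfn K σ₁ j = bfn K σ₂ j := by
  unfold bfn
  rw [h _ (by calc j * (K + 1) < j * (K + 1) + (K + 1) := by omega
              _ = (j + 1) * (K + 1) := by ring
              _ ≤ t := hjt)]

lemma bitfn_congr {K : ℕ} {σ₁ σ₂ : ℕ → ℕ} {j k t : ℕ} (hk : k < K)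
    (hjt : (j + 1) * (K + 1) ≤ t) (h : ∀ m, m < t → σ₁ m = σ₂ m) :
    bitfn K σ₁ j k = bitfn K σ₂ j k := by
  unfold bitfn
  rw [bfn_congr hjt h, h _ (by calc j * (K + 1) + 1 + k < j * (K + 1) + (K + 1) := by omega
              _ = (j + 1) * (K + 1) := by ring
              _ ≤ t := hjt)]

lemma pfn_congr {n K : ℕ} (hn : 0 < n) {σ₁ σ₂ : ℕ → ℕ} {j t : ℕ}
    (hjt : (j + 1) * (K + 1) ≤ t) (h : ∀ m, m < t → σ₁ m = σ₂ m) :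
    pfn n K hn σ₁ j = pfn n K hn σ₂ j := by
  unfold pfn
  congr 1
  funext k
  by_cases hk : k < K
  · rw [if_pos hk, if_pos hk, bitfn_congr hk hjt h]
  · rw [if_neg hk, if_neg hk]

lemma Qry_congr {n K : ℕ} (hn : 0 < n) {σ₁ σ₂ : ℕ → ℕ} {t : ℕ}
    (h : ∀ m, m < t → σ₁ m = σ₂ m) : Qry n K hn σ₁ t = Qry n K hn σ₂ t := by
  have key : ∀ j, j < t / (K + 1) →
      pfn n K hn σ₁ j = pfn n K hn σ₂ j ∧ bfn K σ₁ j = bfn K σ₂ j := by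
    intro j hj
    have hle : (j + 1) * (K + 1) ≤ t :=
      calc (j + 1) * (K + 1) ≤ (t / (K + 1)) * (K + 1) := Nat.mul_le_mul_right _ hj
        _ ≤ t := Nat.div_mul_le_self t (K + 1)
    exact ⟨pfn_congr hn hle h, bfn_congr hle h⟩
  funext q
  unfold Qry
  exact if_congr
    (exists_congr fun j => and_congr_right fun hj => by rw [(key j hj).1])
    (by rw [decide_eq_decide]
        exact exists_congr fun j => and_congr_right fun hj => by
          rw [(key j hj).1, (key j hj).2])
    rfl

lemma histScores_eq (n : ℕ) (g : List ℕ → Fin n → Bool) (z : Fin n → Bool)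
    (π : Equiv.Perm (Fin n)) :
    ∀ t, histScores n g z π t
      = (List.range t).map (fun m => score n z π (g (histScores n g z π m)))
  | 0 => rfl
  | t + 1 => by
      rw [List.range_succ, List.map_append, List.map_singleton,
        show histScores n g z π (t + 1) = histScores n g z π t ++
          [score n z π (g (histScores n g z π t))] from rfl,
        histScores_eq n g z π t]

lemma histScores_length (n : ℕ) (g : List ℕ → Fin n → Bool) (z : Fin n → Bool)
    (π : Equiv.Perm (Fin n)) (t : ℕ) : (histScores n g z π t).length = t := by
  rw [histScores_eq]; simp

lemma histScores_getD (n : ℕ) (g : List ℕ → Fin n → Bool) (z : Fin n → Bool)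
    (π : Equiv.Perm (Fin n)) {m t : ℕ} (hm : m < t) :
    (histScores n g z π t).getD m 0 = score n z π (g (histScores n g z π m)) := by
  rw [histScores_eq]
  have hlen : m < ((List.range t).map
      (fun m => score n z π (g (histScores n g z π m)))).length := by simpa using hm
  rw [List.getD_eq_getElem _ _ hlen]
  simp

lemma le_score_iff {n s : ℕ} (z x : Fin n → Bool) (π : Equiv.Perm (Fin n)) (hs : s ≤ n) :
    s ≤ score n z π x ↔ ∀ j : Fin n, (j : ℕ) < s → z (π j) = x (π j) := by
  unfold score
  constructor
  · intro h j hj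
    obtain ⟨-, hP, -⟩ := (Nat.findGreatest_eq_iff
      (P := fun i => ∀ j : Fin n, (j : ℕ) < i → z (π j) = x (π j))
      (m := Nat.findGreatest (fun i => ∀ j : Fin n, (j : ℕ) < i → z (π j) = x (π j)) n)).mp rfl
    exact hP (by omega) j (by omega)
  · intro h
    exact Nat.le_findGreatest hs h

/-! ### Main decoding lemma -/

lemma decode_correct {n K : ℕ} (hn : 0 < n) (hK : n ≤ 2 ^ K) (σ : ℕ → ℕ)
    (z' : Fin n → Bool) (π' : Equiv.Perm (Fin n))
    (hc : ∀ m, m < n * (K + 1) → score n z' π' (Qry n K hn σ m) = σ m) :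
    ∀ i (hi : i < n), pfn n K hn σ i = π' ⟨i, hi⟩ ∧ bfn K σ i = !(z' (π' ⟨i, hi⟩)) := by
  intro i
  induction i using Nat.strong_induction_on with
  | _ i IH =>
  intro hi
  have hdiv : ∀ r, r ≤ K → (i * (K + 1) + r) / (K + 1) = i := by
    intro r hr
    rw [Nat.add_comm, Nat.add_mul_div_right _ _ (Nat.succ_pos K),
      Nat.div_eq_of_lt (by omega)]
    omega
  have hmod : ∀ r, r ≤ K → (i * (K + 1) + r) % (K + 1) = r := by
    intro r hr
    rw [Nat.add_comm, Nat.add_mul_mod_self_right, Nat.mod_eq_of_lt (by omega)]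
  have hnotmem : ¬ ∃ j, j < i ∧ pfn n K hn σ j = π' ⟨i, hi⟩ := by
    rintro ⟨j, hj, hpj⟩
    rw [(IH j hj (hj.trans hi)).1] at hpj
    have := π'.injective hpj
    simp only [Fin.mk.injEq] at this
    omega
  -- queries of stage i at previously identified positions
  have hquery_prev : ∀ r, r ≤ K → ∀ (j : Fin n), (j : ℕ) < i →
      Qry n K hn σ (i * (K + 1) + r) (π' j) = z' (π' j) := by
    intro r hr j hj
    have hjn : (j : ℕ) < n := j.2
    have hIH := IH (j : ℕ) hj hjn
    have hmem : ∃ j', j' < (i * (K + 1) + r) / (K + 1) ∧ pfn n K hn σ j' = π' j := by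
      rw [hdiv r hr]
      exact ⟨(j : ℕ), hj, by simp [hIH.1]⟩
    unfold Qry
    rw [if_pos hmem]
    cases hz : z' (π' j) with
    | true =>
      apply decide_eq_true
      refine ⟨(j : ℕ), ?_, ?_, ?_⟩
      · rw [hdiv r hr]; exact hj
      · simp [hIH.1]
      · simp [hIH.2, hz]
    | false =>
      apply decide_eq_false
      rintro ⟨j', hj', hp', hb'⟩
      rw [hdiv r hr] at hj'
      have hIH' := IH j' hj' (hj'.trans hi)
      rw [hIH'.1] at hp'
      rw [hIH'.2, hp', hz] at hb'
      simp at hb'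
  -- queries of stage i at position π' i
  have hquery_i : ∀ r, r ≤ K →
      Qry n K hn σ (i * (K + 1) + r) (π' ⟨i, hi⟩)
        = if r = 0 then false else Nat.testBit ((π' ⟨i, hi⟩ : Fin n) : ℕ) (r - 1) := by
    intro r hr
    unfold Qry
    rw [hdiv r hr, hmod r hr, if_neg hnotmem]
  -- score bounds
  have hlt : ∀ r, r ≤ K → i * (K + 1) + r < n * (K + 1) := by
    intro r hr
    calc i * (K + 1) + r < (i + 1) * (K + 1) := by
          have : (i + 1) * (K + 1) = i * (K + 1) + (K + 1) := by ring
          omega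
      _ ≤ n * (K + 1) := Nat.mul_le_mul_right _ hi
  have hiff : ∀ r, r ≤ K → ((i + 1 ≤ σ (i * (K + 1) + r)) ↔
      z' (π' ⟨i, hi⟩) = Qry n K hn σ (i * (K + 1) + r) (π' ⟨i, hi⟩)) := by
    intro r hr
    rw [← hc _ (hlt r hr), le_score_iff _ _ _ hi]
    constructor
    · intro h
      exact h ⟨i, hi⟩ (by simp)
    · intro h j hj
      rcases Nat.lt_succ_iff_lt_or_eq.mp hj with hj' | hj'
      · exact (hquery_prev r hr j hj').symm
      · have : j = ⟨i, hi⟩ := Fin.ext hj'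
        rw [this]; exact h
  have hbfn : bfn K σ i = !(z' (π' ⟨i, hi⟩)) := by
    have hb0 : i + 1 ≤ σ (i * (K + 1)) ↔ z' (π' ⟨i, hi⟩) = false := by
      have hb := hiff 0 (Nat.zero_le K)
      rw [hquery_i 0 (Nat.zero_le K), if_pos rfl] at hb
      simpa using hb
    unfold bfn
    cases hz : z' (π' ⟨i, hi⟩) <;> rw [hz] at hb0 <;> simp [hb0]
  have hbit : ∀ k, k < K → bitfn K σ i k = Nat.testBit ((π' ⟨i, hi⟩ : Fin n) : ℕ) k := by
    intro k hk
    have h1 := hiff (k + 1) (by omega)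
    rw [hquery_i (k + 1) (by omega), if_neg (Nat.succ_ne_zero k), Nat.add_sub_cancel,
      show i * (K + 1) + (k + 1) = i * (K + 1) + 1 + k from by ring] at h1
    unfold bitfn
    rw [hbfn]
    cases hz : z' (π' ⟨i, hi⟩) <;> rw [hz] at h1 <;>
      cases ht : Nat.testBit ((π' ⟨i, hi⟩ : Fin n) : ℕ) k <;> rw [ht] at h1 <;>
      simp [h1]
  refine ⟨?_, hbfn⟩
  apply pick_eq hn hK
  intro k hk
  rw [if_pos hk, hbit k hk]

/-! ### Main theorem -/

/-- The deterministic query complexity of the HiddenPermutation problem is `O(n log n)`. -/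
theorem deterministic_upper_bound :
    ∃ C : ℝ, 0 < C ∧ ∀ n : ℕ, 2 ≤ n →
      ∃ g : List ℕ → Fin n → Bool,
        ∀ (z : Fin n → Bool) (π : Equiv.Perm (Fin n)),
          Identifies n g z π ⌈C * n * Real.logb 2 n⌉₊ := by
  refine ⟨4, by norm_num, ?_⟩
  intro n hn2
  have hn : 0 < n := by omega
  set K := Nat.clog 2 n with hKdef
  have hK : n ≤ 2 ^ K := Nat.le_pow_clog (by norm_num) n
  -- the number of queries used suffices
  have hT : n * (K + 1) ≤ ⌈(4 : ℝ) * n * Real.logb 2 n⌉₊ := by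
    have hn' : (2 : ℝ) ≤ (n : ℝ) := by exact_mod_cast hn2
    have hlogb1 : (1 : ℝ) ≤ Real.logb 2 (n : ℝ) := by
      rw [show (1 : ℝ) = Real.logb 2 2 by simp]
      exact Real.logb_le_logb_of_le (by norm_num) (by norm_num) hn'
    have hK1 : 1 ≤ K := Nat.clog_pos (by norm_num) hn2
    have hKlt : 2 ^ (K - 1) < n := Nat.pow_pred_clog_lt_self (by norm_num) hn2
    have hKle : (K : ℝ) ≤ Real.logb 2 (n : ℝ) + 1 := by
      have hcast : ((2 : ℝ)) ^ (K - 1) < (n : ℝ) := by exact_mod_cast hKlt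
      have h1 : ((K - 1 : ℕ) : ℝ) < Real.logb 2 (n : ℝ) := by
        calc ((K - 1 : ℕ) : ℝ) = Real.logb 2 ((2 : ℝ) ^ (K - 1)) := by
              rw [Real.logb_pow]; simp
          _ < Real.logb 2 (n : ℝ) := Real.logb_lt_logb (by norm_num) (by positivity) hcast
      rw [Nat.cast_sub hK1] at h1
      push_cast at h1 ⊢
      linarith
    have hmain : ((n * (K + 1) : ℕ) : ℝ) ≤ 4 * (n : ℝ) * Real.logb 2 (n : ℝ) := by
      push_cast
      nlinarith [mul_le_mul_of_nonneg_left hKle (by positivity : (0 : ℝ) ≤ (n : ℝ)),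
        mul_le_mul_of_nonneg_left hlogb1 (by positivity : (0 : ℝ) ≤ (n : ℝ))]
    calc n * (K + 1) = ⌈((n * (K + 1) : ℕ) : ℝ)⌉₊ := by rw [Nat.ceil_natCast]
      _ ≤ ⌈(4 : ℝ) * n * Real.logb 2 n⌉₊ := Nat.ceil_le_ceil hmain
  refine ⟨gfun n K hn, ?_⟩
  intro z π z' π' hcons
  set g := gfun n K hn with hg
  set σ : ℕ → ℕ := fun m => score n z π (g (histScores n g z π m)) with hσ
  have hquery : ∀ t, g (histScores n g z π t) = Qry n K hn σ t := by
    intro t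
    rw [hg]
    show Qry n K hn (fun m => (histScores n g z π t).getD m 0)
      (histScores n g z π t).length = Qry n K hn σ t
    rw [histScores_length]
    exact Qry_congr hn (fun m hm => histScores_getD n g z π hm)
  have hc' : ∀ m, m < n * (K + 1) → score n z' π' (Qry n K hn σ m) = σ m := by
    intro m hm
    rw [← hquery m]
    exact hcons m (lt_of_lt_of_le hm hT)
  have hc0 : ∀ m, m < n * (K + 1) → score n z π (Qry n K hn σ m) = σ m := by
    intro m _
    rw [← hquery m]
  have H' := decode_correct hn hK σ z' π' hc'
  have H := decode_correct hn hK σ z π hc0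
  have hπ : π' = π := by
    apply Equiv.ext
    intro q
    have h1 := (H' (q : ℕ) q.2).1
    have h2 := (H (q : ℕ) q.2).1
    rw [h1] at h2
    simpa using h2
  refine ⟨?_, hπ⟩
  funext p
  obtain ⟨q, rfl⟩ := π.surjective p
  have h1 := (H' (q : ℕ) q.2).2
  have h2 := (H (q : ℕ) q.2).2
  rw [h1, hπ] at h2
  simpa using h2
end

section
/- There is a constant c > 0 such that for all sufficiently large n and every deterministic strategy g for the HiddenPermutation problem with n positions, there exists a secret (z,π) ∈ {0,1}^n × S_n that g does not identify within ⌊c·n·log₂ n⌋ queries; that is, at least two distinct secrets are consistent with the guessing history produced by g against (z,π) in its first ⌊c·n·log₂ n⌋ queries. -/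
namespace HiddenPermutation

variable {n : ℕ}

theorem histScores_length (g : List ℕ → Fin n → Bool) (z : Fin n → Bool)
    (π : Equiv.Perm (Fin n)) (k : ℕ) : (histScores n g z π k).length = k := by
  induction k with
  | zero => rfl
  | succ k ih => simp [histScores, ih]

theorem histScores_take (g : List ℕ → Fin n → Bool) (z : Fin n → Bool)
    (π : Equiv.Perm (Fin n)) {k m : ℕ} (hkm : k ≤ m) :
    (histScores n g z π m).take k = histScores n g z π k := by
  induction m, hkm using Nat.le_induction with
  | base => exact List.take_of_length_le (histScores_length g z π k).le
  | succ m _ ih =>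
    rw [histScores, List.take_append_of_le_length (by simpa [histScores_length]), ih]

theorem not_identifies_of_histScores_eq {g : List ℕ → Fin n → Bool} {T : ℕ}
    {z z' : Fin n → Bool} {π π' : Equiv.Perm (Fin n)} (hne : (z', π') ≠ (z, π))
    (h : histScores n g z' π' T = histScores n g z π T) : ¬ Identifies n g z π T := by
  intro hid
  have heq : ∀ m ≤ T, histScores n g z' π' m = histScores n g z π m := fun m hm => by
    rw [← histScores_take g z' π' hm, h, histScores_take g z π hm]
  have hsame : ∀ k < T, score n z' π' (g (histScores n g z π k)) =
      score n z π (g (histScores n g z π k)) := fun k hk => by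
    have hk1 := heq (k + 1) hk
    rw [histScores, histScores, heq k hk.le] at hk1
    simpa using hk1
  obtain ⟨rfl, rfl⟩ := hid z' π' hsame
  exact hne rfl

theorem score_eq_of_first_mismatch {z x : Fin n → Bool} {π : Equiv.Perm (Fin n)} (j : Fin n)
    (hmatch : ∀ i : Fin n, i < j → z (π i) = x (π i)) (hmis : z (π j) ≠ x (π j)) :
    score n z π x = j := by
  rw [score, Nat.findGreatest_eq_iff]
  exact ⟨j.isLt.le, fun _ i hi => hmatch i hi, fun _ hm _ hP => hmis (hP j hm)⟩

theorem exists_perm_getElem (l : List (Fin n)) (hl : l.Nodup) :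
    ∃ π : Equiv.Perm (Fin n), ∀ (i : Fin n) (hi : (i : ℕ) < l.length),
      π i = l[(i : ℕ)] := by
  let f : Fin n → Fin n := fun i => if hi : (i : ℕ) < l.length then l[(i : ℕ)] else i
  have hinj : Set.InjOn f {i | (i : ℕ) < l.length} := by
    intro i (hi : (i : ℕ) < l.length) j (hj : (j : ℕ) < l.length) hij
    simp only [f, dif_pos hi, dif_pos hj] at hij
    exact Fin.ext (hl.getElem_inj_iff.mp hij)
  obtain ⟨e, he⟩ := Set.MapsTo.exists_equiv_extend_of_card_eq (t := Finset.univ) (by simp)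
    (fun i _ => Finset.mem_coe.mpr (Finset.mem_univ (f i))) hinj
  refine ⟨e.trans (Equiv.subtypeUnivEquiv Finset.mem_univ), fun i hi => ?_⟩
  simpa [f, hi] using he i hi

structure AdversaryState (n : ℕ) where
  committed : List (Fin n)
  candidates : Finset (Fin n)
  bits : Fin n → Bool

namespace AdversaryState

variable (s : AdversaryState n)

def commit (b a : Fin n) : AdversaryState n where
  committed := s.committed ++ [b, a]
  candidates := (s.committed ++ [b, a]).toFinsetᶜ
  bits := Function.update s.bits a (!s.bits a)

def firstMismatch (x : Fin n → Bool) : ℕ := s.committed.findIdx (fun q => x q != s.bits q)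

def agreeing (x : Fin n → Bool) : Finset (Fin n) :=
  s.candidates.filter (fun q => x q = s.bits q)

def disagreeing (x : Fin n → Bool) : Finset (Fin n) :=
  s.candidates.filter (fun q => x q ≠ s.bits q)

noncomputable def step (x : Fin n → Bool) : AdversaryState n × ℕ :=
  if s.firstMismatch x < s.committed.length then (s, s.firstMismatch x)
  else if h : (s.agreeing x).card = 1 ∧ (s.disagreeing x).card = 1 then
    (s.commit (Finset.card_eq_one.mp h.2).choose (Finset.card_eq_one.mp h.1).choose,
      s.committed.length)
  else if (s.agreeing x).card ≤ (s.disagreeing x).card then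
    ({ s with candidates := s.disagreeing x }, s.committed.length)
  else ({ s with candidates := s.agreeing x }, s.committed.length + 1)

structure Consistent (z : Fin n → Bool) (π : Equiv.Perm (Fin n)) : Prop where
  committed_eq : ∀ (i : Fin n) (hi : (i : ℕ) < s.committed.length),
    π i = s.committed[(i : ℕ)]
  bits_eq : ∀ i : Fin n, (i : ℕ) ≤ s.committed.length → z (π i) = s.bits (π i)
  mem_candidates : ∀ i : Fin n,
    (i : ℕ) = s.committed.length ∨ (i : ℕ) = s.committed.length + 1 → π i ∈ s.candidates
  bits_eq_not : ∀ i : Fin n, (i : ℕ) = s.committed.length + 1 → z (π i) = !s.bits (π i)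

structure WellFormed : Prop where
  nodup : s.committed.Nodup
  not_mem_committed : ∀ q ∈ s.candidates, q ∉ s.committed
  two_le_card : 2 ≤ s.candidates.card

/-- Halving `candidates` from `n - k ≥ 2 ^ (D + 1)` down to `2` takes at least `D` queries; this
pays for the `2 D` added to the exponent when two positions are committed (`Progress.commit`),
so that `k D ≤ 4 t` throughout (`WellFormed.length_mul_le`). -/
def Progress (D t : ℕ) : Prop :=
  (n - s.committed.length) ^ 2 * 2 ^ (s.committed.length * D) ≤
    s.candidates.card ^ 2 * 2 ^ (4 * t)

variable {s}

theorem length_committed_commit (a b : Fin n) :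
    (s.commit b a).committed.length = s.committed.length + 2 := by
  simp [commit]

theorem WellFormed.card_candidates_le (hw : s.WellFormed) :
    s.candidates.card ≤ n - s.committed.length := by
  have hsub : s.candidates ⊆ s.committed.toFinsetᶜ := fun q hq => by
    simpa using hw.not_mem_committed q hq
  have := Finset.card_le_card hsub
  rwa [Finset.card_compl, List.toFinset_card_of_nodup hw.nodup, Fintype.card_fin] at this

theorem WellFormed.length_add_two_le (hw : s.WellFormed) : s.committed.length + 2 ≤ n := by
  have := hw.card_candidates_le
  have := hw.two_le_card
  omega

section Score

variable {z x : Fin n → Bool} {π : Equiv.Perm (Fin n)}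

theorem Consistent.score_eq_firstMismatch (hw : s.WellFormed) (hc : s.Consistent z π)
    (hlt : s.firstMismatch x < s.committed.length) : score n z π x = s.firstMismatch x := by
  unfold firstMismatch at hlt ⊢
  have hj : s.committed.findIdx (fun q => x q != s.bits q) < n :=
    hlt.trans_le (by have := hw.length_add_two_le; omega)
  refine score_eq_of_first_mismatch ⟨_, hj⟩ (fun i hi => ?_) ?_
  · have hik : (i : ℕ) < s.committed.length := lt_trans (Fin.lt_def.mp hi) hlt
    rw [hc.bits_eq i hik.le, hc.committed_eq i hik]
    exact (by simpa using List.not_of_lt_findIdx hi : x _ = _).symm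
  · rw [hc.bits_eq _ hlt.le, hc.committed_eq _ hlt]
    intro h
    simpa [h] using List.findIdx_getElem (w := hlt)

theorem Consistent.eq_of_lt_length (hc : s.Consistent z π)
    (hx : ∀ q ∈ s.committed, x q = s.bits q) (i : Fin n) (hi : (i : ℕ) < s.committed.length) :
    z (π i) = x (π i) := by
  rw [hc.bits_eq i hi.le, hx _ (hc.committed_eq i hi ▸ List.getElem_mem hi)]

theorem Consistent.score_eq_length (hc : s.Consistent z π)
    (hx : ∀ q ∈ s.committed, x q = s.bits q) (i : Fin n) (hi : (i : ℕ) = s.committed.length)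
    (hmis : x (π i) ≠ s.bits (π i)) : score n z π x = s.committed.length := by
  rw [← hi]
  refine score_eq_of_first_mismatch i (fun j hj => hc.eq_of_lt_length hx j (hi ▸ hj)) ?_
  rw [hc.bits_eq i hi.le]
  exact Ne.symm hmis

theorem Consistent.score_eq_length_add_one (hc : s.Consistent z π)
    (hx : ∀ q ∈ s.committed, x q = s.bits q) (i j : Fin n) (hi : (i : ℕ) = s.committed.length)
    (hj : (j : ℕ) = s.committed.length + 1) (hxi : x (π i) = s.bits (π i))
    (hxj : x (π j) = s.bits (π j)) : score n z π x = s.committed.length + 1 := by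
  rw [← hj]
  refine score_eq_of_first_mismatch j (fun l hl => ?_) ?_
  · rcases Nat.lt_or_ge (l : ℕ) s.committed.length with hl' | hl'
    · exact hc.eq_of_lt_length hx l hl'
    · obtain rfl : l = i := Fin.ext (by omega)
      rw [hxi, hc.bits_eq l hi.le]
  · rw [hc.bits_eq_not j hj, hxj]
    simp

theorem Consistent.of_candidates_subset {S : Finset (Fin n)}
    (hc : Consistent { s with candidates := S } z π) (hS : S ⊆ s.candidates) :
    s.Consistent z π :=
  ⟨hc.committed_eq, hc.bits_eq, fun i hi => hS (hc.mem_candidates i hi), hc.bits_eq_not⟩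

theorem Consistent.of_commit {a b : Fin n} (hw : s.WellFormed) (hc : (s.commit b a).Consistent z π)
    (hb : b ∈ s.candidates) (ha : a ∈ s.candidates) (hba : b ≠ a) :
    s.Consistent z π ∧ ∀ i : Fin n, (i : ℕ) = s.committed.length → π i = b := by
  have hlen := length_committed_commit (s := s) a b
  have hslot : ∀ (i : Fin n) (hi : (i : ℕ) < s.committed.length + 2),
      π i = (s.committed ++ [b, a])[(i : ℕ)]'(by simpa using hi) := fun i hi =>
    hc.committed_eq i (hlen ▸ hi)
  have hk : ∀ i : Fin n, (i : ℕ) = s.committed.length → π i = b := fun i hi => by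
    simp [hslot i (by omega), hi]
  have hk1 : ∀ i : Fin n, (i : ℕ) = s.committed.length + 1 → π i = a := fun i hi => by
    simp [hslot i (by omega), hi]
  have hlt : ∀ (i : Fin n) (hi : (i : ℕ) < s.committed.length), π i = s.committed[(i : ℕ)] :=
    fun i hi => by simp [hslot i (by omega), List.getElem_append_left hi]
  refine ⟨⟨hlt, fun i hi => ?_, ?_, fun i hi => ?_⟩, hk⟩
  · have hne : π i ≠ a := by
      rcases Nat.lt_or_ge (i : ℕ) s.committed.length with hi' | hi'
      · rw [hlt i hi']
        exact fun h => hw.not_mem_committed a ha (h ▸ List.getElem_mem hi')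
      · rw [hk i (by omega)]
        exact hba
    simpa [commit, Function.update_of_ne hne] using hc.bits_eq i (by omega)
  · rintro i (hi | hi)
    · rw [hk i hi]; exact hb
    · rw [hk1 i hi]; exact ha
  · simpa [commit, hk1 i hi] using hc.bits_eq i (by omega)

end Score

theorem sub_length_le_card_candidates_commit (a b : Fin n) :
    n - (s.committed.length + 2) ≤ (s.commit b a).candidates.card := by
  have := List.toFinset_card_le (s.committed ++ [b, a])
  simp only [List.length_append, List.length_cons, List.length_nil] at this
  simp only [AdversaryState.commit, Finset.card_compl, Fintype.card_fin]
  omega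

theorem WellFormed.commit {a b : Fin n} (hw : s.WellFormed) (hb : b ∈ s.candidates)
    (ha : a ∈ s.candidates) (hba : b ≠ a) (hn : s.committed.length + 4 ≤ n) :
    (s.commit b a).WellFormed := by
  refine ⟨?_, fun q hq => List.mem_toFinset.not.mp (Finset.mem_compl.mp hq), ?_⟩
  · refine List.nodup_append.mpr ⟨hw.nodup, by simpa using hba, ?_⟩
    simp only [List.mem_cons, List.not_mem_nil, or_false]
    rintro q hq _ (rfl | rfl) rfl
    exacts [hw.not_mem_committed _ hb hq, hw.not_mem_committed _ ha hq]
  · have := sub_length_le_card_candidates_commit (s := s) a b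
    omega

theorem WellFormed.step_cases (hw : s.WellFormed) (x : Fin n → Bool) :
    (s.firstMismatch x < s.committed.length ∧ s.step x = (s, s.firstMismatch x)) ∨
    (∀ q ∈ s.committed, x q = s.bits q) ∧
      ((∃ S ⊆ s.candidates, 2 ≤ S.card ∧ s.candidates.card ≤ 2 * S.card ∧
          (∀ q ∈ S, x q ≠ s.bits q) ∧
          s.step x = ({ s with candidates := S }, s.committed.length)) ∨
        (∃ S ⊆ s.candidates, 2 ≤ S.card ∧ s.candidates.card ≤ 2 * S.card ∧
          (∀ q ∈ S, x q = s.bits q) ∧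
          s.step x = ({ s with candidates := S }, s.committed.length + 1)) ∨
        ∃ b a, b ∈ s.candidates ∧ x b ≠ s.bits b ∧ a ∈ s.candidates ∧
          x a = s.bits a ∧ s.candidates.card = 2 ∧
          s.step x = (s.commit b a, s.committed.length)) := by
  have hsplit : (s.agreeing x).card + (s.disagreeing x).card = s.candidates.card :=
    Finset.card_filter_add_card_filter_not _
  have hcard := hw.two_le_card
  unfold step
  split_ifs with hforced hcommit hle
  · exact Or.inl ⟨hforced, rfl⟩
  all_goals refine Or.inr ⟨by simpa [firstMismatch, List.findIdx_lt_length] using hforced, ?_⟩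
  · have hb := (Finset.card_eq_one.mp hcommit.2).choose_spec ▸ Finset.mem_singleton_self _
    have ha := (Finset.card_eq_one.mp hcommit.1).choose_spec ▸ Finset.mem_singleton_self _
    simp only [agreeing, disagreeing, Finset.mem_filter] at ha hb
    exact Or.inr (Or.inr ⟨_, _, hb.1, hb.2, ha.1, ha.2, by omega, rfl⟩)
  · exact Or.inl ⟨s.disagreeing x, Finset.filter_subset _ _, by omega, by omega,
      fun q hq => (Finset.mem_filter.mp hq).2, rfl⟩
  · exact Or.inr (Or.inl ⟨s.agreeing x, Finset.filter_subset _ _, by omega, by omega,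
      fun q hq => (Finset.mem_filter.mp hq).2, rfl⟩)

theorem WellFormed.consistent_of_step {z x : Fin n → Bool} {π : Equiv.Perm (Fin n)}
    (hw : s.WellFormed) (hc : (s.step x).1.Consistent z π) :
    s.Consistent z π ∧ score n z π x = (s.step x).2 := by
  have hk := hw.length_add_two_le
  rcases hw.step_cases x with ⟨hforced, heq⟩ | ⟨hx, ⟨S, hS, -, -, hxS, heq⟩ |
    ⟨S, hS, -, -, hxS, heq⟩ | ⟨b, a, hb, hxb, ha, hxa, -, heq⟩⟩ <;> rw [heq] at hc ⊢
  · exact ⟨hc, hc.score_eq_firstMismatch hw hforced⟩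
  · have hi := hc.mem_candidates ⟨s.committed.length, by omega⟩ (Or.inl rfl)
    exact ⟨hc.of_candidates_subset hS,
      (hc.of_candidates_subset hS).score_eq_length hx _ rfl (hxS _ hi)⟩
  · have hi := hc.mem_candidates ⟨s.committed.length, by omega⟩ (Or.inl rfl)
    have hj := hc.mem_candidates ⟨s.committed.length + 1, by omega⟩ (Or.inr rfl)
    exact ⟨hc.of_candidates_subset hS,
      (hc.of_candidates_subset hS).score_eq_length_add_one hx _ _ rfl rfl (hxS _ hi) (hxS _ hj)⟩
  · obtain ⟨hc', hslot⟩ := hc.of_commit hw hb ha (fun h => hxb (h ▸ hxa))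
    exact ⟨hc', hc'.score_eq_length hx ⟨_, by omega⟩ rfl (by rw [hslot _ rfl]; exact hxb)⟩

theorem WellFormed.step {x : Fin n → Bool} (hw : s.WellFormed)
    (hn : s.committed.length + 4 ≤ n) : (s.step x).1.WellFormed := by
  rcases hw.step_cases x with ⟨-, heq⟩ | ⟨-, ⟨S, hS, hS2, -, -, heq⟩ |
    ⟨S, hS, hS2, -, -, heq⟩ | ⟨b, a, hb, hxb, ha, hxa, -, heq⟩⟩ <;> rw [heq]
  · exact hw
  · exact ⟨hw.nodup, fun q hq => hw.not_mem_committed q (hS hq), hS2⟩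
  · exact ⟨hw.nodup, fun q hq => hw.not_mem_committed q (hS hq), hS2⟩
  · exact hw.commit hb ha (fun h => hxb (h ▸ hxa)) hn

variable {D t : ℕ}

theorem Progress.succ_of_card_le {S : Finset (Fin n)} (h : s.Progress D t)
    (hS : s.candidates.card ≤ 2 * S.card) : Progress { s with candidates := S } D (t + 1) :=
  calc (n - s.committed.length) ^ 2 * 2 ^ (s.committed.length * D)
      ≤ s.candidates.card ^ 2 * 2 ^ (4 * t) := h
    _ ≤ (2 * S.card) ^ 2 * 2 ^ (4 * t) := by gcongr
    _ ≤ S.card ^ 2 * 2 ^ (4 * (t + 1)) := by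
      rw [mul_pow, mul_comm (2 ^ 2), mul_assoc, ← pow_add]
      gcongr <;> omega

theorem WellFormed.length_mul_le (hw : s.WellFormed) (h : s.Progress D t) :
    s.committed.length * D ≤ 4 * t := by
  have : s.candidates.card ^ 2 * 2 ^ (s.committed.length * D) ≤
      s.candidates.card ^ 2 * 2 ^ (4 * t) :=
    le_trans (by gcongr; exact hw.card_candidates_le) h
  have hpos : 0 < s.candidates.card ^ 2 := by have := hw.two_le_card; positivity
  exact (Nat.pow_le_pow_iff_right (by norm_num)).mp (Nat.le_of_mul_le_mul_left this hpos)

theorem WellFormed.two_mul_length_lt (hw : s.WellFormed) (hp : s.Progress D t)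
    (h : 8 * t < n * D) : 2 * s.committed.length < n := by
  have := hw.length_mul_le hp
  exact Nat.lt_of_mul_lt_mul_right (a := D) (by nlinarith)

theorem Progress.commit {a b : Fin n} (h : s.Progress D t) (hcard : s.candidates.card = 2)
    (hD : 2 ^ (D + 1) ≤ n - s.committed.length) : (s.commit b a).Progress D (t + 1) := by
  have hpow : 2 ^ (2 * (D + 1) + s.committed.length * D) ≤ 2 ^ (2 + 4 * t) :=
    calc 2 ^ (2 * (D + 1) + s.committed.length * D)
        = (2 ^ (D + 1)) ^ 2 * 2 ^ (s.committed.length * D) := by ring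
      _ ≤ (n - s.committed.length) ^ 2 * 2 ^ (s.committed.length * D) := by gcongr
      _ ≤ s.candidates.card ^ 2 * 2 ^ (4 * t) := h
      _ = 2 ^ 2 * 2 ^ (4 * t) := by rw [hcard]
      _ = 2 ^ (2 + 4 * t) := by ring
  have hexp := (Nat.pow_le_pow_iff_right (by norm_num)).mp hpow
  unfold Progress
  rw [length_committed_commit]
  exact Nat.mul_le_mul (Nat.pow_le_pow_left (sub_length_le_card_candidates_commit a b) 2)
    (Nat.pow_le_pow_right (by norm_num) (by nlinarith))

theorem WellFormed.progress_step {x : Fin n → Bool} (hw : s.WellFormed) (h : s.Progress D t)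
    (hD : 2 ^ (D + 1) ≤ n - s.committed.length) : (s.step x).1.Progress D (t + 1) := by
  rcases hw.step_cases x with ⟨-, heq⟩ | ⟨-, ⟨S, -, -, hS, -, heq⟩ |
    ⟨S, -, -, hS, -, heq⟩ | ⟨b, a, -, -, -, -, hcard, heq⟩⟩ <;> rw [heq]
  · exact h.succ_of_card_le (S := s.candidates) (by omega)
  · exact h.succ_of_card_le hS
  · exact h.succ_of_card_le hS
  · exact h.commit hcard hD

theorem Consistent.of_eq_on {z z' : Fin n → Bool} {π : Equiv.Perm (Fin n)}
    (hc : s.Consistent z π)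
    (h : ∀ i : Fin n, (i : ℕ) ≤ s.committed.length + 1 → z' (π i) = z (π i)) :
    s.Consistent z' π :=
  ⟨hc.committed_eq, fun i hi => (h i (by omega)).trans (hc.bits_eq i hi), hc.mem_candidates,
    fun i hi => (h i (by omega)).trans (hc.bits_eq_not i hi)⟩

theorem WellFormed.exists_consistent_pair (hw : s.WellFormed) (hn : s.committed.length + 3 ≤ n) :
    ∃ (z z' : Fin n → Bool) (π : Equiv.Perm (Fin n)),
      s.Consistent z π ∧ s.Consistent z' π ∧ z ≠ z' := by
  obtain ⟨q₁, hq₁, q₂, hq₂, hq⟩ := (Finset.one_lt_card (s := s.candidates)).mp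
    (by have := hw.two_le_card; omega)
  have hnodup : (s.committed ++ [q₁, q₂]).Nodup := by
    refine List.nodup_append.mpr ⟨hw.nodup, by simpa using hq, ?_⟩
    simp only [List.mem_cons, List.not_mem_nil, or_false]
    rintro q hmem _ (rfl | rfl) rfl
    exacts [hw.not_mem_committed _ hq₁ hmem, hw.not_mem_committed _ hq₂ hmem]
  obtain ⟨π, hπ⟩ := exists_perm_getElem _ hnodup
  have hk : ∀ i : Fin n, (i : ℕ) = s.committed.length → π i = q₁ := fun i hi => by
    simp [hπ i (by simp; omega), hi]
  have hk1 : ∀ i : Fin n, (i : ℕ) = s.committed.length + 1 → π i = q₂ := fun i hi => by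
    simp [hπ i (by simp; omega), hi]
  let z : Fin n → Bool := fun q => if q = q₂ then !s.bits q else s.bits q
  let p := π ⟨s.committed.length + 2, by omega⟩
  have hc : s.Consistent z π := by
    refine ⟨fun i hi => by simp [hπ i (by simp; omega), List.getElem_append_left hi],
      fun i hi => ?_, ?_, fun i hi => by simp [z, hk1 i hi]⟩
    · have : π i ≠ q₂ := hk1 ⟨s.committed.length + 1, by omega⟩ rfl ▸
        π.injective.ne (Fin.ne_of_val_ne (by simp; omega))
      simp [z, this]
    · rintro i (hi | hi)
      · exact hk i hi ▸ hq₁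
      · exact hk1 i hi ▸ hq₂
  refine ⟨z, Function.update z p (!z p), π, hc, hc.of_eq_on fun i hi => ?_, fun h => ?_⟩
  · exact Function.update_of_ne (π.injective.ne (Fin.ne_of_val_ne (by simp; omega))) _ _
  · simpa using congrFun h p

end AdversaryState

noncomputable def play (g : List ℕ → Fin n → Bool) : ℕ → AdversaryState n × List ℕ
  | 0 => (⟨[], Finset.univ, fun _ => true⟩, [])
  | t + 1 =>
    let r := (play g t).1.step (g (play g t).2)
    (r.1, (play g t).2 ++ [r.2])

variable {g : List ℕ → Fin n → Bool}

theorem play_succ (t : ℕ) :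
    play g (t + 1) = (((play g t).1.step (g (play g t).2)).1,
      (play g t).2 ++ [((play g t).1.step (g (play g t).2)).2]) :=
  rfl

theorem histScores_eq_play {z : Fin n → Bool} {π : Equiv.Perm (Fin n)} {T : ℕ}
    (hw : ∀ t < T, (play g t).1.WellFormed) (hc : (play g T).1.Consistent z π) :
    histScores n g z π T = (play g T).2 := by
  induction T with
  | zero => rfl
  | succ t ih =>
    rw [play_succ] at hc ⊢
    obtain ⟨hc', hscore⟩ := (hw t t.lt_succ_self).consistent_of_step hc
    rw [histScores, ih (fun i hi => hw i (by omega)) hc', hscore]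

theorem play_invariant {T D : ℕ} (hT : 8 * T < n * D) (hn : 2 ^ (D + 2) ≤ n) :
    ∀ t ≤ T, (play g t).1.WellFormed ∧ (play g t).1.Progress D t := by
  have hD : D ≠ 0 := by rintro rfl; simp at hT
  have h8 : 2 ^ 3 ≤ n := le_trans (Nat.pow_le_pow_right (by norm_num) (by omega)) hn
  intro t
  induction t with
  | zero =>
    refine fun _ => ⟨⟨List.nodup_nil, fun _ _ => List.not_mem_nil, ?_⟩, ?_⟩
    · show 2 ≤ (Finset.univ : Finset (Fin n)).card
      simp only [Finset.card_univ, Fintype.card_fin]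
      omega
    · simp [play, AdversaryState.Progress]
  | succ t ih =>
    intro ht
    obtain ⟨hw, hp⟩ := ih (by omega)
    have := hw.two_mul_length_lt hp (by nlinarith)
    have : 2 * 2 ^ (D + 1) ≤ n := by rw [← pow_succ']; exact hn
    rw [play_succ]
    exact ⟨hw.step (by omega), hw.progress_step hp (by omega)⟩

theorem exists_not_identifies {T D : ℕ} (g : List ℕ → Fin n → Bool) (hT : 8 * T < n * D)
    (hn : 2 ^ (D + 2) ≤ n) :
    ∃ (z : Fin n → Bool) (π : Equiv.Perm (Fin n)), ¬ Identifies n g z π T := by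
  have hw : ∀ t < T, (play g t).1.WellFormed := fun t ht => (play_invariant hT hn t ht.le).1
  obtain ⟨hwT, hpT⟩ := play_invariant (g := g) hT hn T le_rfl
  have := hwT.two_mul_length_lt hpT hT
  have h4 : 2 ^ 2 ≤ n := le_trans (Nat.pow_le_pow_right (by norm_num) (by omega)) hn
  obtain ⟨z, z', π, hc, hc', hne⟩ := hwT.exists_consistent_pair (by omega)
  refine ⟨z, π, not_identifies_of_histScores_eq (z' := z') (π' := π)
    (by simpa using hne.symm) ?_⟩
  rw [histScores_eq_play hw hc, histScores_eq_play hw hc']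

theorem eight_mul_floor_lt {n : ℕ} (hn : 2 ^ 10 ≤ n) :
    8 * ⌊1 / 64 * (n : ℝ) * Real.logb 2 n⌋₊ < n * (Nat.log 2 n - 2) := by
  have hL : 10 ≤ Nat.log 2 n := Nat.le_log_of_pow_le one_lt_two hn
  have hn1 : (1 : ℝ) ≤ n := by norm_cast; omega
  have hlog : Real.logb 2 n < Nat.log 2 n + 1 := by
    rw [Real.logb_lt_iff_lt_rpow one_lt_two (by positivity)]
    exact_mod_cast Nat.lt_pow_succ_log_self one_lt_two n
  have hfloor := Nat.floor_le (R := ℝ) (a := 1 / 64 * n * Real.logb 2 n)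
    (by have := Real.logb_nonneg one_lt_two hn1; positivity)
  have hLR : (10 : ℝ) ≤ Nat.log 2 n := by exact_mod_cast hL
  rw [← Nat.cast_lt (α := ℝ)]
  push_cast [Nat.cast_sub (by omega : 2 ≤ Nat.log 2 n)]
  nlinarith

end HiddenPermutation

/-- The deterministic query complexity of the HiddenPermutation problem is `Ω(n log n)`:
for some `c > 0` and all large enough `n`, every deterministic strategy fails to identify
some secret within `⌊c · n · log₂ n⌋` queries (i.e. at least two distinct secrets are
consistent with the produced guessing history). -/
theorem deterministic_lower_bound :
    ∃ c : ℝ, 0 < c ∧ ∃ N : ℕ, ∀ n : ℕ, N ≤ n →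
      ∀ g : List ℕ → Fin n → Bool,
        ∃ (z : Fin n → Bool) (π : Equiv.Perm (Fin n)),
          ¬ Identifies n g z π ⌊c * n * Real.logb 2 n⌋₊ := by
  refine ⟨1 / 64, by norm_num, 2 ^ 10, fun n hn g => ?_⟩
  refine HiddenPermutation.exists_not_identifies g (HiddenPermutation.eight_mul_floor_lt hn) ?_
  have hL : 10 ≤ Nat.log 2 n := Nat.le_log_of_pow_le one_lt_two hn
  rw [Nat.sub_add_cancel (by omega)]
  exact Nat.pow_log_le_self 2 (by positivity)
end

section
/- Let n ∈ ℕ, t ≥ 1, and let H = ((x^1,s^1),…,(x^t,s^t)) be a guessing history with candidate sets V_1,…,V_n. Let s* = max{s^1,…,s^t} and let x* = x^h for some h with s^h = s*. Then a secret pair (z,π) ∈ {0,1}^n × S_n is consistent with H if and only if (a) f_{z,π}(x*) = s* and (b) π(j) ∈ V_j for all j ∈ [n]. -/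
/-- The candidate set `V_j` of the guessing history `((x^1,s^1),…,(x^t,s^t))`:
`i ∉ V_j` iff one of the exclusion rules (1)–(3) applies. Here `j : Fin n` is the
0-indexed version of the 1-indexed position `j+1`, so e.g. `j ≤ s^h` reads
`(j : ℕ) + 1 ≤ s h` and `j − 1` reads `(j : ℕ)`. -/
def candidateSet (n t : ℕ) (x : Fin t → Fin n → Bool) (s : Fin t → ℕ) (j : Fin n) :
    Set (Fin n) :=
  {i | ¬ ((∃ h ℓ : Fin t, (j : ℕ) + 1 ≤ s h ∧ s h ≤ s ℓ ∧ x h i ≠ x ℓ i) ∨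
          (∃ h ℓ : Fin t, s h = (j : ℕ) ∧ s ℓ = (j : ℕ) ∧ x h i ≠ x ℓ i) ∨
          (∃ h ℓ : Fin t, s h = (j : ℕ) ∧ (j : ℕ) < s ℓ ∧ x h i = x ℓ i))}

lemma score_eq_iff (n : ℕ) (z : Fin n → Bool) (π : Equiv.Perm (Fin n))
    (x : Fin n → Bool) (s : ℕ) (hs : s ≤ n) :
    score n z π x = s ↔
      (∀ j : Fin n, (j : ℕ) < s → z (π j) = x (π j)) ∧
      ∀ h : s < n, z (π ⟨s, h⟩) ≠ x (π ⟨s, h⟩) := by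
  rw [score, Nat.findGreatest_eq_iff]
  constructor
  · rintro ⟨-, h1, h2⟩
    have hA : ∀ j : Fin n, (j : ℕ) < s → z (π j) = x (π j) := by
      intro j hj
      exact h1 (by omega) j hj
    refine ⟨hA, ?_⟩
    intro hlt hcon
    apply h2 (Nat.lt_succ_self s) hlt
    intro j hj
    rcases Nat.lt_succ_iff_lt_or_eq.mp hj with h | h
    · exact hA j h
    · have : j = ⟨s, hlt⟩ := Fin.ext h
      rw [this]; exact hcon
  · rintro ⟨hA, hB⟩
    refine ⟨hs, fun _ => hA, fun m hm hmn hP => ?_⟩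
    have hsn : s < n := lt_of_lt_of_le hm hmn
    exact hB hsn (hP ⟨s, hsn⟩ hm)

/-- Theorem 2.1: a secret `(z,π)` is consistent with a guessing history iff it attains the
maximum score on a maximum-score query and `π(j) ∈ V_j` for all `j`. -/
theorem consistent_iff_candidate (n t : ℕ) (ht : 1 ≤ t)
    (x : Fin t → Fin n → Bool) (s : Fin t → ℕ) (hs : ∀ i, s i ≤ n)
    (hstar : Fin t) (hmax : ∀ i, s i ≤ s hstar)
    (z : Fin n → Bool) (π : Equiv.Perm (Fin n)) :
    (∀ i, score n z π (x i) = s i) ↔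
      (score n z π (x hstar) = s hstar ∧
        ∀ j : Fin n, π j ∈ candidateSet n t x s j) := by
  constructor
  · intro hcons
    have hchar : ∀ i, (∀ k : Fin n, (k : ℕ) < s i → z (π k) = x i (π k)) ∧
        ∀ h : s i < n, z (π ⟨s i, h⟩) ≠ x i (π ⟨s i, h⟩) :=
      fun i => (score_eq_iff n z π (x i) (s i) (hs i)).mp (hcons i)
    have hne_at : ∀ (i : Fin t) (k : Fin n), (k : ℕ) = s i → z (π k) ≠ x i (π k) := by
      intro i k hk
      have hlt : s i < n := hk ▸ k.isLt
      have hk' : k = ⟨s i, hlt⟩ := Fin.ext hk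
      rw [hk']
      exact (hchar i).2 hlt
    refine ⟨hcons hstar, fun j => ?_⟩
    rintro (⟨h, l, h1, h2, hne⟩ | ⟨h, l, h1, h2, hne⟩ | ⟨h, l, h1, h2, heq⟩)
    · have e1 := (hchar h).1 j (by omega)
      have e2 := (hchar l).1 j (by omega)
      exact hne (e1.symm.trans e2)
    · have e1 := hne_at h j h1.symm
      have e2 := hne_at l j h2.symm
      revert e1 e2 hne
      cases z (π j) <;> cases x h (π j) <;> cases x l (π j) <;> simp
    · have e1 := hne_at h j h1.symm
      have e2 := (hchar l).1 j h2
      exact e1 (e2.trans heq.symm)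
  · rintro ⟨hstar_eq, hcand⟩ i
    have hstarchar := (score_eq_iff n z π (x hstar) (s hstar) (hs hstar)).mp hstar_eq
    refine (score_eq_iff n z π (x i) (s i) (hs i)).mpr ⟨?_, ?_⟩
    · intro k hk
      have hxx : x i (π k) = x hstar (π k) := by
        by_contra hne
        exact hcand k (Or.inl ⟨i, hstar, by omega, hmax i, hne⟩)
      rw [hxx]
      exact hstarchar.1 k (by have := hmax i; omega)
    · intro hlt
      set k : Fin n := ⟨s i, hlt⟩ with hkdef
      have hk : (k : ℕ) = s i := rfl
      rcases eq_or_lt_of_le (hmax i) with heq | hlt2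
      · have hxx : x i (π k) = x hstar (π k) := by
          by_contra hne
          exact hcand k (Or.inr (Or.inl ⟨i, hstar, hk.symm, by omega, hne⟩))
        have hlt' : s hstar < n := by omega
        have hk' : (⟨s hstar, hlt'⟩ : Fin n) = k := by rw [hkdef]; exact Fin.ext heq.symm
        have := hstarchar.2 hlt'
        rw [hk'] at this
        rw [hxx]
        exact this
      · have hxx : x i (π k) ≠ x hstar (π k) := by
          intro hne
          exact hcand k (Or.inr (Or.inr ⟨i, hstar, hk.symm, by omega, hne⟩))
        have := hstarchar.1 k (by omega)
        intro hcon
        exact hxx (hcon.symm.trans this)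
end

section
/- Let n ∈ ℕ, t ≥ 1, and let H = ((x^1,s^1),…,(x^t,s^t)) be a feasible guessing history with candidate sets V_1,…,V_n. Then the candidate sets form a laminar family in the following sense: for all i < j in [n], either V_i ∩ V_j = ∅ or V_i ⊆ V_j. -/
/-- The candidate sets of a feasible guessing history form a laminar family:
for `i < j`, either `V_i ∩ V_j = ∅` or `V_i ⊆ V_j`. -/
theorem candidate_sets_laminar (n t : ℕ) (ht : 1 ≤ t)
    (x : Fin t → Fin n → Bool) (s : Fin t → ℕ) (hs : ∀ i, s i ≤ n)
    (hfeas : ∃ (z : Fin n → Bool) (π : Equiv.Perm (Fin n)), ∀ i, score n z π (x i) = s i)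
    (i j : Fin n) (hij : i < j) :
    candidateSet n t x s i ∩ candidateSet n t x s j = ∅ ∨
      candidateSet n t x s i ⊆ candidateSet n t x s j := by
  rw [or_iff_not_imp_left]
  intro hne
  obtain ⟨p, hpi, hpj⟩ := Set.nonempty_iff_ne_empty.mpr hne
  intro q hq
  simp only [candidateSet, Set.mem_setOf_eq] at hpi hpj hq ⊢
  have hij' : (i : ℕ) + 1 ≤ (j : ℕ) := hij
  intro hcon
  rcases hcon with ⟨h, l, h1, h2, h3⟩ | ⟨h, l, h1, h2, h3⟩ | ⟨h, l, h1, h2, h3⟩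
  · exact hq (Or.inl ⟨h, l, le_trans (by omega) h1, h2, h3⟩)
  · exact hq (Or.inl ⟨h, l, by omega, by omega, h3⟩)
  · by_cases hxp : x h p = x l p
    · exact hpj (Or.inr (Or.inr ⟨h, l, h1, h2, hxp⟩))
    · exact hpi (Or.inl ⟨h, l, by omega, by omega, hxp⟩)
end

section
/- Let n ∈ ℕ and let V_1,…,V_n ⊆ [n] be sets such that for all i < j, either V_i ∩ V_j = ∅ or V_i ⊆ V_j, and such that |V_i| ≥ |{ j < i : V_j ⊆ V_i }| for every i ∈ [n]. Then the number of permutations π of [n] satisfying π(i) ∈ V_i for all i ∈ [n] equals ∏_{i=1}^{n} ( |V_i| − |{ j < i : V_j ⊆ V_i }| ). -/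
open Finset

lemma snoc_injective' {n k : ℕ} {g : Fin k → Fin n} {a : Fin n}
    (hg : Function.Injective g) (ha : ∀ j, g j ≠ a) :
    Function.Injective (Fin.snoc g a) := by
  intro x y hxy
  induction x using Fin.lastCases with
  | last =>
    induction y using Fin.lastCases with
    | last => rfl
    | cast y =>
      rw [Fin.snoc_last, Fin.snoc_castSucc] at hxy
      exact absurd hxy.symm (ha y)
  | cast x =>
    induction y using Fin.lastCases with
    | last =>
      rw [Fin.snoc_last, Fin.snoc_castSucc] at hxy
      exact absurd hxy (ha x)
    | cast y =>
      rw [Fin.snoc_castSucc, Fin.snoc_castSucc] at hxy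
      exact congrArg Fin.castSucc (hg hxy)

lemma count_aux (n : ℕ) (W : ℕ → Finset (Fin n))
    (hlam : ∀ i j : ℕ, i < j → W i ∩ W j = ∅ ∨ W i ⊆ W j) :
    ∀ k : ℕ,
      (Finset.univ.filter (fun f : Fin k → Fin n =>
          Function.Injective f ∧ ∀ i : Fin k, f i ∈ W i)).card
        = ∏ i ∈ Finset.range k,
            ((W i).card - ((Finset.range i).filter (fun j => W j ⊆ W i)).card) := by
  intro k
  induction k with
  | zero =>
    rw [Finset.prod_range_zero, Finset.filter_true_of_mem]
    · simp
    · intro f _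
      exact ⟨fun a => a.elim0, fun i => i.elim0⟩
  | succ k ih =>
    classical
    have hmaps : ∀ f ∈ (Finset.univ.filter (fun f : Fin (k+1) → Fin n =>
        Function.Injective f ∧ ∀ i : Fin (k+1), f i ∈ W i)),
        Fin.init f ∈ (Finset.univ.filter (fun f : Fin k → Fin n =>
          Function.Injective f ∧ ∀ i : Fin k, f i ∈ W i)) := by
      intro f hf
      rw [Finset.mem_filter] at hf ⊢
      refine ⟨Finset.mem_univ _, hf.2.1.comp (Fin.castSucc_injective k), fun i => ?_⟩
      have := hf.2.2 i.castSucc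
      simpa [Fin.init] using this
    rw [Finset.card_eq_sum_card_fiberwise hmaps]
    have hfiber : ∀ g ∈ (Finset.univ.filter (fun f : Fin k → Fin n =>
          Function.Injective f ∧ ∀ i : Fin k, f i ∈ W i)),
        ((Finset.univ.filter (fun f : Fin (k+1) → Fin n =>
          Function.Injective f ∧ ∀ i : Fin (k+1), f i ∈ W i)).filter
            (fun f => Fin.init f = g)).card
        = (W k).card - ((Finset.range k).filter (fun j => W j ⊆ W k)).card := by
      intro g hg
      rw [Finset.mem_filter] at hg
      obtain ⟨-, hginj, hgmem⟩ := hg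
      have hcard : ((Finset.univ.filter (fun f : Fin (k+1) → Fin n =>
          Function.Injective f ∧ ∀ i : Fin (k+1), f i ∈ W i)).filter
            (fun f => Fin.init f = g)).card
          = ((W k) \ Finset.univ.image g).card := by
        apply Finset.card_bij (fun f _ => f (Fin.last k))
        · intro f hf
          rw [Finset.mem_filter, Finset.mem_filter] at hf
          obtain ⟨⟨-, hinj, hmem⟩, hfg⟩ := hf
          rw [Finset.mem_sdiff]
          constructor
          · have := hmem (Fin.last k)
            simpa using this
          · rw [Finset.mem_image]
            rintro ⟨j, -, hj⟩
            have hj' : f j.castSucc = f (Fin.last k) := by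
              rw [← hfg] at hj
              simpa [Fin.init] using hj
            exact absurd (hinj hj') (Fin.castSucc_lt_last j).ne
        · intro f₁ h₁ f₂ h₂ he
          rw [Finset.mem_filter] at h₁ h₂
          funext x
          induction x using Fin.lastCases with
          | last => exact he
          | cast x =>
            have e1 : f₁ x.castSucc = Fin.init f₁ x := rfl
            have e2 : f₂ x.castSucc = Fin.init f₂ x := rfl
            rw [e1, e2, h₁.2, h₂.2]
        · intro a ha
          rw [Finset.mem_sdiff] at ha
          have ha' : ∀ j, g j ≠ a := by
            intro j h
            exact ha.2 (Finset.mem_image.2 ⟨j, Finset.mem_univ j, h⟩)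
          refine ⟨Fin.snoc g a, ?_, by simp⟩
          rw [Finset.mem_filter, Finset.mem_filter]
          refine ⟨⟨Finset.mem_univ _, snoc_injective' hginj ha', fun i => ?_⟩, by simp⟩
          induction i using Fin.lastCases with
          | last => simpa using ha.1
          | cast i => simpa using hgmem i
      rw [hcard]
      have hsplit : W (k : ℕ) \ Finset.univ.image g
          = W (k : ℕ) \ (W (k : ℕ) ∩ Finset.univ.image g) := by
        rw [Finset.sdiff_inter_self_left]
      rw [hsplit, Finset.card_sdiff_of_subset Finset.inter_subset_left]
      congr 1
      have hsub : W (k : ℕ) ∩ Finset.univ.image g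
          = Finset.image g (Finset.univ.filter (fun j : Fin k => W (j : ℕ) ⊆ W k)) := by
        ext x
        simp only [Finset.mem_inter, Finset.mem_image, Finset.mem_filter, Finset.mem_univ,
          true_and]
        constructor
        · rintro ⟨hxk, j, rfl⟩
          refine ⟨j, ?_, rfl⟩
          rcases hlam j k j.isLt with hd | hs
          · exact absurd (Finset.mem_inter.2 ⟨hgmem j, hxk⟩) (by simp [hd])
          · exact hs
        · rintro ⟨j, hj, rfl⟩
          exact ⟨hj (hgmem j), j, rfl⟩
      rw [hsub, Finset.card_image_of_injective _ hginj]
      refine Finset.card_bij (fun (j : Fin k) (_ : j ∈ Finset.univ.filter (fun j : Fin k => W (j : ℕ) ⊆ W k)) => (j : ℕ)) ?_ ?_ ?_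
      · intro j hj
        simp only [Finset.mem_filter, Finset.mem_univ, true_and] at hj
        simp only [Finset.mem_filter, Finset.mem_range]
        exact ⟨j.isLt, hj⟩
      · intro a _ b _ h
        exact Fin.val_injective h
      · intro a ha
        simp only [Finset.mem_filter, Finset.mem_range] at ha
        exact ⟨⟨a, ha.1⟩, by simp [ha.2], rfl⟩
    rw [Finset.sum_congr rfl hfiber, Finset.sum_const, smul_eq_mul, ih,
      Finset.prod_range_succ]


/-- Counting permutations constrained by a laminar family: if `V_1,…,V_n ⊆ [n]` form a
laminar family (for `i < j`, `V_i ∩ V_j = ∅` or `V_i ⊆ V_j`) and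
`|V_i| ≥ |{j < i : V_j ⊆ V_i}|` for all `i`, then the number of permutations `π` with
`π(i) ∈ V_i` for all `i` equals `∏_i (|V_i| − |{j < i : V_j ⊆ V_i}|)`. -/
theorem count_laminar_permutations (n : ℕ) (V : Fin n → Finset (Fin n))
    (hlam : ∀ i j : Fin n, i < j → V i ∩ V j = ∅ ∨ V i ⊆ V j)
    (hsize : ∀ i : Fin n,
      (Finset.univ.filter (fun j => j < i ∧ V j ⊆ V i)).card ≤ (V i).card) :
    Nat.card {π : Equiv.Perm (Fin n) // ∀ i, π i ∈ V i} =
      ∏ i : Fin n,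
        ((V i).card - (Finset.univ.filter (fun j => j < i ∧ V j ⊆ V i)).card) := by
  classical
  set W : ℕ → Finset (Fin n) := fun i => if h : i < n then V ⟨i, h⟩ else ∅ with hW
  have hWV : ∀ i : Fin n, W (i : ℕ) = V i := by
    intro i
    simp [hW, i.isLt]
  have hWlam : ∀ i j : ℕ, i < j → W i ∩ W j = ∅ ∨ W i ⊆ W j := by
    intro i j hij
    by_cases hj : j < n
    · have hi : i < n := hij.trans hj
      simp only [hW, dif_pos hi, dif_pos hj]
      exact hlam ⟨i, hi⟩ ⟨j, hj⟩ hij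
    · left
      simp [hW, dif_neg hj]
  have key := count_aux n W hWlam n
  have e : {π : Equiv.Perm (Fin n) // ∀ i, π i ∈ V i}
      ≃ {f : Fin n → Fin n // Function.Injective f ∧ ∀ i : Fin n, f i ∈ W (i : ℕ)} :=
    { toFun := fun π => ⟨π.1, π.1.injective, fun i => by rw [hWV i]; exact π.2 i⟩
      invFun := fun f => ⟨Equiv.ofBijective f.1 ((Finite.injective_iff_bijective).mp f.2.1),
        fun i => by have := f.2.2 i; rwa [hWV i] at this⟩
      left_inv := fun π => Subtype.ext (Equiv.ext fun x => rfl)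
      right_inv := fun f => Subtype.ext rfl }
  have hlhs : Nat.card {π : Equiv.Perm (Fin n) // ∀ i, π i ∈ V i}
      = (Finset.univ.filter (fun f : Fin n → Fin n =>
          Function.Injective f ∧ ∀ i : Fin n, f i ∈ W (i : ℕ))).card := by
    rw [Nat.card_congr e, Nat.card_eq_fintype_card, Fintype.card_subtype]
  rw [hlhs, key, ← Fin.prod_univ_eq_prod_range
    (fun i => (W i).card - ((Finset.range i).filter (fun j => W j ⊆ W i)).card) n]
  apply Finset.prod_congr rfl
  intro i _
  have hc : (Finset.univ.filter (fun j : Fin n => j < i ∧ V j ⊆ V i)).card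
      = ((Finset.range (i : ℕ)).filter (fun j => W j ⊆ W (i : ℕ))).card := by
    refine Finset.card_bij (fun (j : Fin n) (_ : j ∈ Finset.univ.filter (fun j : Fin n => j < i ∧ V j ⊆ V i)) => (j : ℕ)) ?_ ?_ ?_
    · intro j hj
      simp only [Finset.mem_filter, Finset.mem_univ, true_and] at hj
      simp only [Finset.mem_filter, Finset.mem_range]
      refine ⟨hj.1, ?_⟩
      rw [hWV j, hWV i]
      exact hj.2
    · intro a _ b _ h
      exact Fin.val_injective h
    · intro a ha
      simp only [Finset.mem_filter, Finset.mem_range] at ha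
      have hlt : a < n := ha.1.trans i.isLt
      refine ⟨⟨a, hlt⟩, Finset.mem_filter.2 ⟨Finset.mem_univ _, ha.1, ?_⟩, rfl⟩
      have h2 := ha.2
      simp only [hW, dif_pos hlt, dif_pos i.isLt] at h2
      exact h2
  rw [← hc, hWV i]
end

section
/- Let n ∈ ℕ, z ∈ {0,1}^n, π a permutation of [n], s < n, and x ∈ {0,1}^n with f_{z,π}(x) = s. Let V ⊆ [n] be a set with π(s+1) ∈ V and π(j) ∉ V for all j ≤ s, let F ⊆ V, and let y be obtained from x by flipping all bits in positions in F. Then: if π(s+1) ∈ F then f_{z,π}(y) ≥ s+1, and if π(s+1) ∉ F then f_{z,π}(y) = s. In particular, f_{z,π}(y) > s if and only if π(s+1) ∈ F. -/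
/-- `flipSet n x F` is `x ⊕ e_F`: `x` with all bits in positions of `F` flipped. -/
def flipSet (n : ℕ) (x : Fin n → Bool) (F : Finset (Fin n)) : Fin n → Bool :=
  fun i => if i ∈ F then !x i else x i

/-- One step of randomized binary search (Lemma 4.2): with `f_{z,π}(x) = s`,
`π(s+1) ∈ V`, `π(j) ∉ V` for `j ≤ s`, and `F ⊆ V`, flipping the bits in `F` yields score
`≥ s+1` if `π(s+1) ∈ F` and score exactly `s` otherwise; in particular the new score
exceeds `s` iff `π(s+1) ∈ F`. -/
theorem binary_search_step (n : ℕ) (z x : Fin n → Bool) (π : Equiv.Perm (Fin n))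
    (s : ℕ) (hs : s < n) (hx : score n z π x = s)
    (V F : Finset (Fin n)) (hFV : F ⊆ V)
    (hmem : π ⟨s, hs⟩ ∈ V) (hnot : ∀ j : Fin n, (j : ℕ) < s → π j ∉ V) :
    (π ⟨s, hs⟩ ∈ F → s + 1 ≤ score n z π (flipSet n x F)) ∧
    (π ⟨s, hs⟩ ∉ F → score n z π (flipSet n x F) = s) ∧
    (s < score n z π (flipSet n x F) ↔ π ⟨s, hs⟩ ∈ F) := by
  simp only [score] at hx ⊢
  set y := flipSet n x F with hy
  have hP0 : ∀ j : Fin n, (j : ℕ) < 0 → z (π j) = x (π j) :=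
    fun j hj => absurd hj (by omega)
  have hQ0 : ∀ j : Fin n, (j : ℕ) < 0 → z (π j) = y (π j) :=
    fun j hj => absurd hj (by omega)
  -- P s holds
  have hPs : ∀ j : Fin n, (j : ℕ) < s → z (π j) = x (π j) := by
    have := Nat.findGreatest_spec (P := fun i => ∀ j : Fin n, (j : ℕ) < i → z (π j) = x (π j))
      (Nat.zero_le n) hP0
    rwa [hx] at this
  -- ¬ P (s+1)
  have hPns : ¬ ∀ j : Fin n, (j : ℕ) < s + 1 → z (π j) = x (π j) :=
    Nat.findGreatest_is_greatest
      (P := fun i => ∀ j : Fin n, (j : ℕ) < i → z (π j) = x (π j)) (k := s + 1) (n := n)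
      (by omega) (by omega)
  -- the mismatch is exactly at position s
  have hmis : z (π ⟨s, hs⟩) ≠ x (π ⟨s, hs⟩) := by
    intro heq
    apply hPns
    intro j hj
    rcases Nat.lt_succ_iff_lt_or_eq.mp hj with h | h
    · exact hPs j h
    · rw [show j = ⟨s, hs⟩ from Fin.ext (by simpa using h)]; exact heq
  -- y agrees with x on positions π j for j < s
  have hagree : ∀ j : Fin n, (j : ℕ) < s → y (π j) = x (π j) := by
    intro j hj
    have : π j ∉ F := fun h => hnot j hj (hFV h)
    simp [hy, flipSet, this]
  have hQs : ∀ j : Fin n, (j : ℕ) < s → z (π j) = y (π j) :=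
    fun j hj => (hPs j hj).trans (hagree j hj).symm
  have hflip : π ⟨s, hs⟩ ∈ F → z (π ⟨s, hs⟩) = y (π ⟨s, hs⟩) := by
    intro hF
    have hyx : y (π ⟨s, hs⟩) = !x (π ⟨s, hs⟩) := by simp [hy, flipSet, hF]
    rw [hyx]
    revert hmis; cases z (π ⟨s, hs⟩) <;> cases x (π ⟨s, hs⟩) <;> simp
  have hQsucc : π ⟨s, hs⟩ ∈ F → ∀ j : Fin n, (j : ℕ) < s + 1 → z (π j) = y (π j) := by
    intro hF j hj
    rcases Nat.lt_succ_iff_lt_or_eq.mp hj with h | h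
    · exact hQs j h
    · rw [show j = ⟨s, hs⟩ from Fin.ext (by simpa using h)]; exact hflip hF
  have key1 : π ⟨s, hs⟩ ∈ F →
      s + 1 ≤ Nat.findGreatest (fun i => ∀ j : Fin n, (j : ℕ) < i → z (π j) = y (π j)) n :=
    fun hF => Nat.le_findGreatest (by omega) (hQsucc hF)
  have key2 : π ⟨s, hs⟩ ∉ F →
      Nat.findGreatest (fun i => ∀ j : Fin n, (j : ℕ) < i → z (π j) = y (π j)) n = s := by
    intro hF
    have hQns : ¬ ∀ j : Fin n, (j : ℕ) < s + 1 → z (π j) = y (π j) := by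
      intro h
      have hh := h ⟨s, hs⟩ (by simp)
      have hyx : y (π ⟨s, hs⟩) = x (π ⟨s, hs⟩) := by simp [hy, flipSet, hF]
      rw [hyx] at hh
      exact hmis hh
    have hle : Nat.findGreatest (fun i => ∀ j : Fin n, (j : ℕ) < i → z (π j) = y (π j)) n ≤ s := by
      by_contra hgt
      push_neg at hgt
      have h2 := Nat.findGreatest_spec (P := fun i => ∀ j : Fin n, (j : ℕ) < i → z (π j) = y (π j))
        (Nat.zero_le n) hQ0
      apply hQns
      intro j hj
      exact h2 j (by omega)
    have hge := Nat.le_findGreatest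
      (P := fun i => ∀ j : Fin n, (j : ℕ) < i → z (π j) = y (π j)) (m := s) (n := n)
      (by omega) hQs
    omega
  refine ⟨key1, key2, ?_, fun hF => by have := key1 hF; omega⟩
  intro hlt
  by_contra hF
  have := key2 hF
  omega
end

section
/- Let n ∈ ℕ, z ∈ {0,1}^n, π a permutation of [n], and s < n. Let V_1,…,V_s ⊆ [n] with π(j) ∈ V_j for all j ≤ s, let U = ⋃_{j=1}^{s} V_j, let x ∈ {0,1}^n with f_{z,π}(x) ≥ s, and let y be obtained from x by flipping all bits in positions in [n] \ U. Then f_{z,π}(y) ≥ s, and π(s+1) ∈ U if and only if ( f_{z,π}(x) > s ⟺ f_{z,π}(y) > s ). In particular, if π(s+1) ∉ U then exactly one of f_{z,π}(x), f_{z,π}(y) equals s and the other is greater than s. -/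
lemma score_spec (n : ℕ) (z : Fin n → Bool) (π : Equiv.Perm (Fin n)) (x : Fin n → Bool)
    (j : Fin n) (hj : (j : ℕ) < score n z π x) : z (π j) = x (π j) := by
  have h := Nat.findGreatest_spec (P := fun i => ∀ j : Fin n, (j : ℕ) < i → z (π j) = x (π j))
    (Nat.zero_le n) (by intro j hj; omega)
  exact h j hj

lemma le_score (n : ℕ) (z : Fin n → Bool) (π : Equiv.Perm (Fin n)) (x : Fin n → Bool)
    (s : ℕ) (hsn : s ≤ n) (h : ∀ j : Fin n, (j : ℕ) < s → z (π j) = x (π j)) :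
    s ≤ score n z π x :=
  Nat.le_findGreatest hsn h

lemma lt_score_iff (n : ℕ) (z : Fin n → Bool) (π : Equiv.Perm (Fin n)) (x : Fin n → Bool)
    (s : ℕ) (hs : s < n) (hsle : s ≤ score n z π x) :
    s < score n z π x ↔ z (π ⟨s, hs⟩) = x (π ⟨s, hs⟩) := by
  constructor
  · intro h
    exact score_spec n z π x ⟨s, hs⟩ h
  · intro h
    apply le_score n z π x (s + 1) hs
    intro j hj
    rcases Nat.lt_succ_iff_lt_or_eq.1 hj with hj | hj
    · exact score_spec n z π x j (lt_of_lt_of_le hj hsle)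
    · have : j = ⟨s, hs⟩ := Fin.ext hj
      rw [this]; exact h

/-- The advancing step: with `π(j) ∈ V_j` for all (1-indexed) `j ≤ s`,
`U = ⋃_{j ≤ s} V_j`, `f_{z,π}(x) ≥ s` and `y = x` with all bits outside `U` flipped:
`f_{z,π}(y) ≥ s`; `π(s+1) ∈ U` iff (`f_{z,π}(x) > s ↔ f_{z,π}(y) > s`); and if
`π(s+1) ∉ U` then exactly one of the two scores equals `s` and the other exceeds `s`. -/
theorem advance_step (n : ℕ) (z x : Fin n → Bool) (π : Equiv.Perm (Fin n))
    (s : ℕ) (hs : s < n) (V : Fin n → Finset (Fin n))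
    (hV : ∀ j : Fin n, (j : ℕ) < s → π j ∈ V j)
    (hx : s ≤ score n z π x)
    (U : Finset (Fin n))
    (hU : U = (Finset.univ.filter (fun j : Fin n => (j : ℕ) < s)).biUnion V)
    (y : Fin n → Bool) (hy : y = fun i => if i ∈ U then x i else !x i) :
    s ≤ score n z π y ∧
    (π ⟨s, hs⟩ ∈ U ↔ (s < score n z π x ↔ s < score n z π y)) ∧
    (π ⟨s, hs⟩ ∉ U →
      (score n z π x = s ∧ s < score n z π y) ∨
      (s < score n z π x ∧ score n z π y = s)) := by
  have hmemU : ∀ j : Fin n, (j : ℕ) < s → π j ∈ U := by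
    intro j hj
    rw [hU]
    exact Finset.mem_biUnion.2 ⟨j, Finset.mem_filter.2 ⟨Finset.mem_univ _, hj⟩, hV j hj⟩
  have hPy : ∀ j : Fin n, (j : ℕ) < s → z (π j) = y (π j) := by
    intro j hj
    rw [hy]
    simp only [hmemU j hj, if_pos]
    exact score_spec n z π x j (lt_of_lt_of_le hj hx)
  have hy_le : s ≤ score n z π y := le_score n z π y s hs.le hPy
  have hix := lt_score_iff n z π x s hs hx
  have hiy := lt_score_iff n z π y s hs hy_le
  set k := π ⟨s, hs⟩ with hk
  refine ⟨hy_le, ?_, ?_⟩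
  · constructor
    · intro hkU
      rw [hix, hiy, hy]
      simp [hkU]
    · intro hiff
      by_contra hkU
      rw [hix, hiy, hy] at hiff
      simp only [hkU, if_neg, not_false_iff] at hiff
      rcases Bool.eq_false_or_eq_true (x k) with h | h <;>
        rcases Bool.eq_false_or_eq_true (z k) with h' | h' <;>
        simp [h, h'] at hiff
  · intro hkU
    have hne : ¬ (s < score n z π x ↔ s < score n z π y) := by
      rw [hix, hiy, hy]
      simp only [hkU, if_neg, not_false_iff]
      rcases Bool.eq_false_or_eq_true (x k) with h | h <;>
        rcases Bool.eq_false_or_eq_true (z k) with h' | h' <;>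
        simp [h, h']
    rcases Nat.lt_or_ge s (score n z π x) with h | h
    · right
      refine ⟨h, le_antisymm ?_ hy_le⟩
      by_contra hle
      exact hne ⟨fun _ => lt_of_not_ge fun hh => hle (le_antisymm hh hy_le).le , fun _ => h⟩
    · left
      have hxeq : score n z π x = s := le_antisymm h hx
      refine ⟨hxeq, ?_⟩
      rcases Nat.lt_or_ge s (score n z π y) with h' | h'
      · exact h'
      · exact absurd ⟨fun hh => absurd hxeq (by omega), fun hh => absurd (le_antisymm h' hy_le) (by omega)⟩ hne
end

section
/- Fix n ∈ ℕ, t ≥ 1, queries x^1,…,x^t ∈ {0,1}^n and scores s^1,…,s^t ∈ {0,…,n}, and let V_1,…,V_n and m be the associated parity candidate sets and maximum score. Then: (i) if 1 ≤ i < j ≤ m and i ≢ j (mod 2), then V_i ∩ V_j = ∅; (ii) if V_j is active and i < j < m, then V_i ∩ V_j = ∅; (iii) for every i ≤ m, V_i ⊆ V_{m+1} if i ≡ m (mod 2), and V_i ∩ V_{m+1} = ∅ if i ≢ m (mod 2); (iv) for all i < j, if V_i ∩ V_j ≠ ∅ then V_i ⊆ V_j. -/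
/-- The parity candidate sets after the first `r` queries. The hidden string is tied to the
permutation by `z_{π(i)} = i mod 2` (1-indexed), so with 0-indexed `i : Fin n` representing
position `i+1`, after a query `x^{r+1} = x r` with score `s r` the set `V_i` is intersected
with `P_{(i+1) mod 2}(x r)` if `i+1 ≤ s r`, with `P_{(s r) mod 2}(x r)` if `i+1 = s r + 1`,
and is unchanged otherwise, where `P_b(x) = {p : x_p = b}`. -/
def parityCand (n : ℕ) (x : ℕ → Fin n → Bool) (s : ℕ → ℕ) : ℕ → Fin n → Finset (Fin n)
  | 0, _ => Finset.univ
  | r + 1, i =>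
      if (i : ℕ) + 1 ≤ s r then
        (parityCand n x s r i).filter (fun p => x r p = decide (((i : ℕ) + 1) % 2 = 1))
      else if (i : ℕ) = s r then
        (parityCand n x s r i).filter (fun p => x r p = decide (s r % 2 = 1))
      else parityCand n x s r i

/-- The maximum score `m = max{s^1,…,s^t}` among the first `t` queries. -/
def maxScore (t : ℕ) (s : ℕ → ℕ) : ℕ := (Finset.range t).sup s

/-- `V_i` (0-indexed `i`, representing 1-indexed position `i+1`) is active:
`i+1 < min{n/3, m}` and for some query `r` the score was `s^r = (i+1) − 1` while all earlier
queries had score `< (i+1) − 1`. -/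
def IsActive (n t : ℕ) (s : ℕ → ℕ) (i : Fin n) : Prop :=
  (((i : ℕ) + 1 : ℝ) < min ((n : ℝ) / 3) ((maxScore t s : ℕ) : ℝ)) ∧
  ∃ r < t, s r = (i : ℕ) ∧ ∀ r' < r, s r' < (i : ℕ)

lemma mem_parityCand_iff (n : ℕ) (x : ℕ → Fin n → Bool) (s : ℕ → ℕ) (t : ℕ) (i p : Fin n) :
    p ∈ parityCand n x s t i ↔
      ∀ r < t, (i : ℕ) ≤ s r →
        x r p = decide ((if (i : ℕ) < s r then ((i : ℕ) + 1) % 2 else s r % 2) = 1) := by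
  induction t with
  | zero => simp [parityCand]
  | succ t ih =>
    rw [parityCand]
    by_cases h1 : (i : ℕ) + 1 ≤ s t
    · simp only [if_pos h1, Finset.mem_filter, ih]
      constructor
      · rintro ⟨h, hx⟩ r hr hle
        rcases Nat.lt_succ_iff_lt_or_eq.mp hr with hr | rfl
        · exact h r hr hle
        · rw [if_pos (by omega)]; exact hx
      · intro h
        refine ⟨fun r hr hle => h r (by omega) hle, ?_⟩
        have := h t (Nat.lt_succ_self t) (by omega)
        rwa [if_pos (by omega)] at this
    · by_cases h2 : (i : ℕ) = s t
      · simp only [if_neg h1, if_pos h2, Finset.mem_filter, ih]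
        constructor
        · rintro ⟨h, hx⟩ r hr hle
          rcases Nat.lt_succ_iff_lt_or_eq.mp hr with hr | rfl
          · exact h r hr hle
          · rw [if_neg (by omega)]; exact hx
        · intro h
          refine ⟨fun r hr hle => h r (by omega) hle, ?_⟩
          have := h t (Nat.lt_succ_self t) (by omega)
          rwa [if_neg (by omega)] at this
      · simp only [if_neg h1, if_neg h2, ih]
        constructor
        · intro h r hr hle
          rcases Nat.lt_succ_iff_lt_or_eq.mp hr with hr | rfl
          · exact h r hr hle
          · omega
        · intro h r hr hle; exact h r (by omega) hle

/-- Lemma 5.2 (properties of parity candidate sets). With `V i = parityCand n x s t i` and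
`m = maxScore t s` (1-indexed positions `a+1`, `b+1` for `a b : Fin n`):
(i) sets of indices `≤ m` with different parities are disjoint;
(ii) an active set is disjoint from any earlier-indexed set, provided its index is `< m`;
(iii) a set of index `≤ m` is contained in `V_{m+1}` if its parity matches `m`, and is
disjoint from `V_{m+1}` otherwise;
(iv) any two intersecting sets are nested. -/
theorem parity_candidate_properties (n t : ℕ) (ht : 1 ≤ t)
    (x : ℕ → Fin n → Bool) (s : ℕ → ℕ) (hs : ∀ r < t, s r ≤ n) :
    (∀ a b : Fin n, (a : ℕ) < (b : ℕ) → (b : ℕ) + 1 ≤ maxScore t s →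
      ((a : ℕ) + 1) % 2 ≠ ((b : ℕ) + 1) % 2 →
      parityCand n x s t a ∩ parityCand n x s t b = ∅) ∧
    (∀ a b : Fin n, IsActive n t s b → (a : ℕ) < (b : ℕ) → (b : ℕ) + 1 < maxScore t s →
      parityCand n x s t a ∩ parityCand n x s t b = ∅) ∧
    (∀ (hm : maxScore t s < n) (a : Fin n), (a : ℕ) + 1 ≤ maxScore t s →
      ((((a : ℕ) + 1) % 2 = maxScore t s % 2 →
          parityCand n x s t a ⊆ parityCand n x s t ⟨maxScore t s, hm⟩) ∧
        (((a : ℕ) + 1) % 2 ≠ maxScore t s % 2 →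
          parityCand n x s t a ∩ parityCand n x s t ⟨maxScore t s, hm⟩ = ∅))) ∧
    (∀ a b : Fin n, (a : ℕ) < (b : ℕ) →
      parityCand n x s t a ∩ parityCand n x s t b ≠ ∅ →
      parityCand n x s t a ⊆ parityCand n x s t b) := by
  classical
  obtain ⟨r0, hr0mem, hr0⟩ := Finset.exists_mem_eq_sup (Finset.range t)
    ⟨0, Finset.mem_range.mpr ht⟩ s
  rw [Finset.mem_range] at hr0mem
  have hmax : maxScore t s = s r0 := hr0
  have hle_max : ∀ r < t, s r ≤ maxScore t s := fun r hr =>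
    Finset.le_sup (Finset.mem_range.mpr hr)
  refine ⟨?_, ?_, ?_, ?_⟩
  · intro a b hab hb hpar
    rw [Finset.eq_empty_iff_forall_notMem]
    intro p hp
    rw [Finset.mem_inter, mem_parityCand_iff, mem_parityCand_iff] at hp
    have h1 := hp.1 r0 hr0mem (by omega)
    have h2 := hp.2 r0 hr0mem (by omega)
    rw [if_pos (by omega : (a : ℕ) < s r0)] at h1
    rw [if_pos (by omega : (b : ℕ) < s r0)] at h2
    rw [h1] at h2
    simp only [decide_eq_decide] at h2
    omega
  · rintro a b ⟨-, r1, hr1t, hr1eq, -⟩ hab hb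
    rw [Finset.eq_empty_iff_forall_notMem]
    intro p hp
    rw [Finset.mem_inter, mem_parityCand_iff, mem_parityCand_iff] at hp
    by_cases hpar : ((a : ℕ) + 1) % 2 = ((b : ℕ) + 1) % 2
    · have h1 := hp.1 r1 hr1t (by omega)
      have h2 := hp.2 r1 hr1t (by omega)
      rw [if_pos (by omega : (a : ℕ) < s r1)] at h1
      rw [if_neg (by omega : ¬ (b : ℕ) < s r1)] at h2
      rw [h1] at h2
      simp only [decide_eq_decide] at h2
      omega
    · have h1 := hp.1 r0 hr0mem (by omega)
      have h2 := hp.2 r0 hr0mem (by omega)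
      rw [if_pos (by omega : (a : ℕ) < s r0)] at h1
      rw [if_pos (by omega : (b : ℕ) < s r0)] at h2
      rw [h1] at h2
      simp only [decide_eq_decide] at h2
      omega
  · intro hm a ha
    have hbv : ((⟨maxScore t s, hm⟩ : Fin n) : ℕ) = maxScore t s := rfl
    constructor
    · intro hpar p hp
      rw [mem_parityCand_iff] at hp ⊢
      intro r hr hle
      rw [hbv] at hle ⊢
      have hsr : s r = maxScore t s := le_antisymm (hle_max r hr) hle
      rw [if_neg (by omega : ¬ maxScore t s < s r)]
      have h1 := hp r hr (by omega)
      rw [if_pos (by omega : (a : ℕ) < s r)] at h1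
      rw [h1]
      simp only [decide_eq_decide]
      omega
    · intro hpar
      rw [Finset.eq_empty_iff_forall_notMem]
      intro p hp
      rw [Finset.mem_inter, mem_parityCand_iff, mem_parityCand_iff] at hp
      have h1 := hp.1 r0 hr0mem (by omega)
      have h2 := hp.2 r0 hr0mem (by rw [hbv]; omega)
      rw [hbv] at h2
      rw [if_pos (by omega : (a : ℕ) < s r0)] at h1
      rw [if_neg (by omega : ¬ maxScore t s < s r0)] at h2
      rw [h1] at h2
      simp only [decide_eq_decide] at h2
      omega
  · intro a b hab hne
    obtain ⟨q, hq⟩ := Finset.nonempty_of_ne_empty hne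
    rw [Finset.mem_inter, mem_parityCand_iff, mem_parityCand_iff] at hq
    intro p hp
    rw [mem_parityCand_iff] at hp ⊢
    intro r hr hle
    have h1 := hq.1 r hr (by omega)
    have h2 := hq.2 r hr hle
    have h3 := hp r hr (by omega)
    rw [if_pos (by omega : (a : ℕ) < s r)] at h1 h3
    rw [h3, ← h1, h2]
end

section
/- Let n ∈ ℕ and let V_1,…,V_n ⊆ [n] satisfy: for all i < j, either V_i ∩ V_j = ∅ or V_i ⊆ V_j. Fix i ∈ [n] and let k = |{ j < i : V_j ⊆ V_i }|. Let σ = (σ_1,…,σ_i) be a sequence of i distinct elements of [n] and let σ' = (σ_1,…,σ_{i−1}). Let n_σ be the number of permutations π of [n] with π(j) ∈ V_j for all j ∈ [n] and π(j) = σ_j for all j ≤ i, and let n_{σ'} be the number of permutations π of [n] with π(j) ∈ V_j for all j ∈ [n] and π(j) = σ_j for all j ≤ i−1. If n_σ > 0, then n_{σ'} = (|V_i| − k) · n_σ. -/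
/-!
Fix an admissible permutation `ρ` with the given prefix. An admissible `π` agreeing with `ρ`
below `i` sends `i` to some `v ∈ V i` not yet used by the prefix, and composing with the
transposition `(v ρ(i))` is a bijection between those with `π(i) = v` and those agreeing with
`ρ` up to `i`: by laminarity, any later `V j` containing one of `v, ρ(i)` contains all of
`V i`, so admissibility survives the swap. The values `ρ(j)`, `j < i`, that lie in `V i` are
exactly those with `V j ⊆ V i`, so there are `|V i| - k` choices of `v`.
-/

open Finset
open Equiv (Perm swap swap_apply_left swap_apply_right swap_apply_of_ne_of_ne swap_comm
  swap_mul_self_mul)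

variable {α : Type*} [LinearOrder α] {V : α → Finset α}

def IsOrderedLaminar (V : α → Finset α) : Prop :=
  ∀ i j, i < j → Disjoint (V i) (V j) ∨ V i ⊆ V j

lemma IsOrderedLaminar.subset_of_mem_of_mem (hlam : IsOrderedLaminar V) {i j : α} (hij : i < j)
    {x : α} (hi : x ∈ V i) (hj : x ∈ V j) : V i ⊆ V j :=
  (hlam i j hij).resolve_left (not_disjoint_iff.mpr ⟨x, hi, hj⟩)

lemma swap_mul_mem_of_forall_mem (hlam : IsOrderedLaminar V)
    {π : Perm α} (hπ : ∀ j, π j ∈ V j) {i y : α} (hy : y ∈ V i) (hyi : ∀ j < i, π j ≠ y) :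
    ∀ j, (swap (π i) y * π) j ∈ V j := by
  intro j
  rw [Equiv.Perm.mul_apply]
  by_cases hxj : π j = π i
  · rw [π.injective hxj, swap_apply_left]
    exact hy
  by_cases hyj : π j = y
  · have hij : i < j := lt_of_le_of_ne (not_lt.mp fun h => hyi j h hyj)
      fun h => hxj (h ▸ rfl)
    rw [hyj, swap_apply_right]
    exact hlam.subset_of_mem_of_mem hij hy (hyj ▸ hπ j) (hπ i)
  · rw [swap_apply_of_ne_of_ne hxj hyj]
    exact hπ j

variable [Fintype α]

def prefixExtensions (V : α → Finset α) (ρ : Perm α) (s : Finset α) : Finset (Perm α) :=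
  univ.filter fun π => (∀ j, π j ∈ V j) ∧ ∀ j ∈ s, π j = ρ j

lemma card_prefixExtensions_lt_filter_apply_eq (hlam : IsOrderedLaminar V) {ρ : Perm α}
    (hρ : ∀ j, ρ j ∈ V j) {i v : α} (hv : v ∈ V i) (hvρ : ∀ j < i, ρ j ≠ v) :
    #{π ∈ prefixExtensions V ρ {j | j < i} | π i = v} = #(prefixExtensions V ρ {j | j ≤ i}) := by
  have hfix : ∀ j < i, swap v (ρ i) (ρ j) = ρ j := fun j hj =>
    swap_apply_of_ne_of_ne (hvρ j hj) (ρ.injective.ne hj.ne)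
  refine card_nbij' (swap v (ρ i) * ·) (swap v (ρ i) * ·) ?_ ?_ ?_ ?_
  · rintro π hπ
    simp only [coe_filter, prefixExtensions, mem_filter, mem_univ, true_and,
      Set.mem_ofPred_eq] at hπ ⊢
    obtain ⟨⟨hπV, hπρ⟩, rfl⟩ := hπ
    refine ⟨swap_mul_mem_of_forall_mem hlam hπV (hρ i) fun j hj => ?_, fun j hj => ?_⟩
    · rw [hπρ j hj]
      exact ρ.injective.ne hj.ne
    · obtain hj | rfl := hj.lt_or_eq
      · rw [Equiv.Perm.mul_apply, hπρ j hj, hfix j hj]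
      · rw [Equiv.Perm.mul_apply, swap_apply_left]
  · rintro π hπ
    simp only [coe_filter, prefixExtensions, mem_filter, mem_univ, true_and,
      Set.mem_ofPred_eq] at hπ ⊢
    obtain ⟨hπV, hπρ⟩ := hπ
    have hπi : π i = ρ i := hπρ i le_rfl
    refine ⟨⟨?_, fun j hj => ?_⟩, ?_⟩
    · rw [swap_comm, ← hπi]
      exact swap_mul_mem_of_forall_mem hlam hπV hv fun j hj => hπρ j hj.le ▸ hvρ j hj
    · rw [Equiv.Perm.mul_apply, hπρ j hj.le, hfix j hj]
    · rw [Equiv.Perm.mul_apply, hπi, swap_apply_right]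
  · intro π _
    exact swap_mul_self_mul _ _ _
  · intro π _
    exact swap_mul_self_mul _ _ _

lemma card_prefixExtensions_lt (hlam : IsOrderedLaminar V)
    {ρ : Perm α} (hρ : ∀ j, ρ j ∈ V j) (i : α) :
    #(prefixExtensions V ρ {j | j < i}) =
      #(V i \ image ρ {j | j < i}) * #(prefixExtensions V ρ {j | j ≤ i}) := by
  have hmaps : ∀ π ∈ prefixExtensions V ρ {j | j < i}, π i ∈ V i \ image ρ {j | j < i} := by
    intro π hπ
    simp only [prefixExtensions, mem_filter, mem_univ, true_and] at hπ
    simp only [mem_sdiff, mem_image, mem_filter, mem_univ, true_and, not_exists, not_and]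
    refine ⟨hπ.1 i, fun j hj hji => hj.ne (π.injective ?_)⟩
    rw [hπ.2 j hj, hji]
  rw [card_eq_sum_card_fiberwise hmaps]
  refine sum_const_nat fun v hv => ?_
  simp only [mem_sdiff, mem_image, mem_filter, mem_univ, true_and, not_exists, not_and] at hv
  exact card_prefixExtensions_lt_filter_apply_eq hlam hρ hv.1 hv.2

lemma card_sdiff_image_lt (hlam : IsOrderedLaminar V)
    {ρ : Perm α} (hρ : ∀ j, ρ j ∈ V j) (i : α) :
    #(V i \ image ρ {j | j < i}) = #(V i) - #{j | j < i ∧ V j ⊆ V i} := by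
  have hinter : image ρ {j | j < i} ∩ V i = image ρ {j | j < i ∧ V j ⊆ V i} := by
    ext x
    simp only [mem_inter, mem_image, mem_filter, mem_univ, true_and]
    constructor
    · rintro ⟨⟨j, hj, rfl⟩, hjV⟩
      exact ⟨j, ⟨hj, hlam.subset_of_mem_of_mem hj (hρ j) hjV⟩, rfl⟩
    · rintro ⟨j, ⟨hj, hjV⟩, rfl⟩
      exact ⟨⟨j, hj, rfl⟩, hjV (hρ j)⟩
  rw [card_sdiff, hinter, card_image_of_injective _ ρ.injective]

lemma card_subtype_eq_card_prefixExtensions {ρ : Perm α} {s : Finset α}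
    {P : Perm α → Prop} (hP : ∀ π, P π ↔ ∀ j ∈ s, π j = ρ j) :
    Nat.card {π : Perm α // (∀ j, π j ∈ V j) ∧ P π} = #(prefixExtensions V ρ s) := by
  rw [← Nat.card_eq_finsetCard]
  refine Nat.card_congr (Equiv.subtypeEquivRight fun π => ?_)
  simp [prefixExtensions, hP]

theorem prefix_extension_count_general (n : ℕ) (V : Fin n → Finset (Fin n))
    (hlam : ∀ i j : Fin n, i < j → V i ∩ V j = ∅ ∨ V i ⊆ V j)
    (i : Fin n) (σ : Fin ((i : ℕ) + 1) → Fin n)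
    (hpos : 0 < Nat.card {π : Equiv.Perm (Fin n) //
        (∀ j, π j ∈ V j) ∧
        ∀ (j : Fin n) (hj : (j : ℕ) ≤ (i : ℕ)), π j = σ ⟨(j : ℕ), Nat.lt_succ_of_le hj⟩}) :
    Nat.card {π : Equiv.Perm (Fin n) //
        (∀ j, π j ∈ V j) ∧
        ∀ (j : Fin n) (hj : (j : ℕ) < (i : ℕ)), π j = σ ⟨(j : ℕ), Nat.lt_succ_of_lt hj⟩} =
      ((V i).card - (Finset.univ.filter (fun j => j < i ∧ V j ⊆ V i)).card) *
        Nat.card {π : Equiv.Perm (Fin n) //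
          (∀ j, π j ∈ V j) ∧
          ∀ (j : Fin n) (hj : (j : ℕ) ≤ (i : ℕ)), π j = σ ⟨(j : ℕ), Nat.lt_succ_of_le hj⟩} := by
  obtain ⟨⟨ρ, hρV, hρσ⟩⟩ := (Nat.card_pos_iff.mp hpos).1
  have hlam' : IsOrderedLaminar V := by
    simpa only [IsOrderedLaminar, disjoint_iff_inter_eq_empty] using hlam
  rw [card_subtype_eq_card_prefixExtensions (ρ := ρ) (s := {j | j < i}) fun π => ?lt,
    card_subtype_eq_card_prefixExtensions (ρ := ρ) (s := {j | j ≤ i}) fun π => ?le,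
    card_prefixExtensions_lt hlam' hρV, card_sdiff_image_lt hlam' hρV]
  case lt =>
    simp only [mem_filter, mem_univ, true_and, Fin.lt_def]
    exact forall_congr' fun j => forall_congr' fun hj => by rw [hρσ j hj.le]
  case le =>
    simp only [mem_filter, mem_univ, true_and, Fin.le_def]
    exact forall_congr' fun j => forall_congr' fun hj => by rw [hρσ j hj]

/-- Lemma 5.4: let `V_1,…,V_n ⊆ [n]` be laminar, `i ∈ [n]` (0-indexed `i : Fin n`
representing position `i+1`), `k = |{j < i : V_j ⊆ V_i}|`, and let
`σ = (σ_1,…,σ_{i+1})` be a repetition-free sequence. If `n_σ`, the number of permutations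
`π` with `π(j) ∈ V_j` for all `j` and prefix `σ`, is positive, then the number `n_{σ'}` of
such permutations with prefix `σ' = (σ_1,…,σ_i)` satisfies `n_{σ'} = (|V_i| − k)·n_σ`. -/
theorem prefix_extension_count (n : ℕ) (V : Fin n → Finset (Fin n))
    (hlam : ∀ i j : Fin n, i < j → V i ∩ V j = ∅ ∨ V i ⊆ V j)
    (i : Fin n) (σ : Fin ((i : ℕ) + 1) → Fin n) (hσ : Function.Injective σ)
    (hpos : 0 < Nat.card {π : Equiv.Perm (Fin n) //
        (∀ j, π j ∈ V j) ∧
        ∀ (j : Fin n) (hj : (j : ℕ) ≤ (i : ℕ)), π j = σ ⟨(j : ℕ), Nat.lt_succ_of_le hj⟩}) :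
    Nat.card {π : Equiv.Perm (Fin n) //
        (∀ j, π j ∈ V j) ∧
        ∀ (j : Fin n) (hj : (j : ℕ) < (i : ℕ)), π j = σ ⟨(j : ℕ), Nat.lt_succ_of_lt hj⟩} =
      ((V i).card - (Finset.univ.filter (fun j => j < i ∧ V j ⊆ V i)).card) *
        Nat.card {π : Equiv.Perm (Fin n) //
          (∀ j, π j ∈ V j) ∧
          ∀ (j : Fin n) (hj : (j : ℕ) ≤ (i : ℕ)), π j = σ ⟨(j : ℕ), Nat.lt_succ_of_le hj⟩} :=
  prefix_extension_count_general n V hlam i σ hpos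
end

section
/- Let n ∈ ℕ and let V_1,…,V_n ⊆ [n] satisfy: for all i < j, either V_i ∩ V_j = ∅ or V_i ⊆ V_j. Fix i ∈ [n], let σ' = (σ_1,…,σ_{i−1}) be a sequence of i−1 distinct elements of [n], and let s_1, s_2 ∈ V_i. For b ∈ {1,2}, let n_{σ_b} be the number of permutations π of [n] with π(j) ∈ V_j for all j ∈ [n], π(j) = σ_j for all j ≤ i−1, and π(i) = s_b. If n_{σ_1} > 0 and n_{σ_2} > 0, then n_{σ_1} = n_{σ_2}. -/
/-- Corollary 5.5: let `V_1,…,V_n ⊆ [n]` be laminar, `i ∈ [n]` (0-indexed `i : Fin n`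
representing position `i+1`), `σ' = (σ_1,…,σ_i)` a repetition-free sequence, and
`s₁, s₂ ∈ V_i`. If the numbers of permutations `π` with `π(j) ∈ V_j` for all `j`,
prefix `σ'`, and `π(i) = s₁` (resp. `π(i) = s₂`) are both positive, then they are equal. -/
theorem prefix_extension_uniform (n : ℕ) (V : Fin n → Finset (Fin n))
    (hlam : ∀ i j : Fin n, i < j → V i ∩ V j = ∅ ∨ V i ⊆ V j)
    (i : Fin n) (σ' : Fin (i : ℕ) → Fin n) (hσ' : Function.Injective σ')
    (s₁ s₂ : Fin n) (hs₁ : s₁ ∈ V i) (hs₂ : s₂ ∈ V i)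
    (h₁ : 0 < Nat.card {π : Equiv.Perm (Fin n) //
        (∀ j, π j ∈ V j) ∧
        (∀ (j : Fin n) (hj : (j : ℕ) < (i : ℕ)), π j = σ' ⟨(j : ℕ), hj⟩) ∧ π i = s₁})
    (h₂ : 0 < Nat.card {π : Equiv.Perm (Fin n) //
        (∀ j, π j ∈ V j) ∧
        (∀ (j : Fin n) (hj : (j : ℕ) < (i : ℕ)), π j = σ' ⟨(j : ℕ), hj⟩) ∧ π i = s₂}) :
    Nat.card {π : Equiv.Perm (Fin n) //
        (∀ j, π j ∈ V j) ∧
        (∀ (j : Fin n) (hj : (j : ℕ) < (i : ℕ)), π j = σ' ⟨(j : ℕ), hj⟩) ∧ π i = s₁} =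
      Nat.card {π : Equiv.Perm (Fin n) //
        (∀ j, π j ∈ V j) ∧
        (∀ (j : Fin n) (hj : (j : ℕ) < (i : ℕ)), π j = σ' ⟨(j : ℕ), hj⟩) ∧ π i = s₂} := by
  rcases eq_or_ne s₁ s₂ with rfl | hne
  · rfl
  obtain ⟨⟨π₁, hπ₁V, hπ₁σ, hπ₁i⟩⟩ := (Nat.card_pos_iff.mp h₁).1
  obtain ⟨⟨π₂, hπ₂V, hπ₂σ, hπ₂i⟩⟩ := (Nat.card_pos_iff.mp h₂).1
  -- s₁ and s₂ do not appear in the prefix σ'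
  have hσs₁ : ∀ (j : Fin n) (hj : (j : ℕ) < (i : ℕ)), σ' ⟨(j : ℕ), hj⟩ ≠ s₁ := by
    intro j hj h
    have h2 : π₁ j = π₁ i := by rw [hπ₁σ j hj, hπ₁i, h]
    have hji : j = i := π₁.injective h2
    rw [hji] at hj; exact lt_irrefl _ hj
  have hσs₂ : ∀ (j : Fin n) (hj : (j : ℕ) < (i : ℕ)), σ' ⟨(j : ℕ), hj⟩ ≠ s₂ := by
    intro j hj h
    have h2 : π₂ j = π₂ i := by rw [hπ₂σ j hj, hπ₂i, h]
    have hji : j = i := π₂.injective h2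
    rw [hji] at hj; exact lt_irrefl _ hj
  -- the key step: composing with the transposition (s₁ s₂) preserves the constraints
  have key : ∀ t₁ t₂ : Fin n, t₁ ∈ V i → t₂ ∈ V i → t₁ ≠ t₂ →
      (∀ (j : Fin n) (hj : (j : ℕ) < (i : ℕ)), σ' ⟨(j : ℕ), hj⟩ ≠ t₁) →
      (∀ (j : Fin n) (hj : (j : ℕ) < (i : ℕ)), σ' ⟨(j : ℕ), hj⟩ ≠ t₂) →
      ∀ π : Equiv.Perm (Fin n), (∀ j, π j ∈ V j) →
      (∀ (j : Fin n) (hj : (j : ℕ) < (i : ℕ)), π j = σ' ⟨(j : ℕ), hj⟩) → π i = t₁ →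
      (∀ j, (Equiv.swap t₁ t₂ * π) j ∈ V j) ∧
        (∀ (j : Fin n) (hj : (j : ℕ) < (i : ℕ)),
          (Equiv.swap t₁ t₂ * π) j = σ' ⟨(j : ℕ), hj⟩) ∧
        (Equiv.swap t₁ t₂ * π) i = t₂ := by
    intro t₁ t₂ ht₁ ht₂ htne hσt₁ hσt₂ π hV hσ hi
    refine ⟨?_, ?_, ?_⟩
    · intro j
      simp only [Equiv.Perm.mul_apply]
      rcases eq_or_ne (π j) t₁ with h | h1
      · have hji : j = i := π.injective (by rw [h, ← hi])
        rw [h, Equiv.swap_apply_left, hji]; exact ht₂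
      rcases eq_or_ne (π j) t₂ with h | h2
      · -- π j = t₂, j ≠ i, and j is not in the prefix, so i < j
        have hji : j ≠ i := by
          intro hj; rw [hj, hi] at h; exact htne h
        have hij : i < j := by
          rcases lt_trichotomy ((j : ℕ)) ((i : ℕ)) with hlt | heq | hgt
          · exact absurd (by rw [← hσ j hlt, h]) (hσt₂ j hlt).symm
          · exact absurd (Fin.ext heq) hji
          · exact hgt
        rw [h, Equiv.swap_apply_right]
        rcases hlam i j hij with hd | hsub
        · exfalso
          have : t₂ ∈ V i ∩ V j := Finset.mem_inter.mpr ⟨ht₂, h ▸ hV j⟩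
          rw [hd] at this; exact absurd this (Finset.notMem_empty _)
        · exact hsub ht₁
      · rw [Equiv.swap_apply_of_ne_of_ne h1 h2]; exact hV j
    · intro j hj
      simp only [Equiv.Perm.mul_apply, hσ j hj]
      exact Equiv.swap_apply_of_ne_of_ne (hσt₁ j hj) (hσt₂ j hj)
    · simp only [Equiv.Perm.mul_apply, hi, Equiv.swap_apply_left]
  refine Nat.card_congr (Equiv.subtypeEquiv (Equiv.mulLeft (Equiv.swap s₁ s₂)) fun π => ?_)
  constructor
  · rintro ⟨hV, hσ, hi⟩
    exact key s₁ s₂ hs₁ hs₂ hne hσs₁ hσs₂ π hV hσ hi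
  · rintro ⟨hV, hσ, hi⟩
    have := key s₂ s₁ hs₂ hs₁ hne.symm hσs₂ hσs₁ (Equiv.swap s₁ s₂ * π) hV hσ hi
    have heq : Equiv.swap s₂ s₁ * (Equiv.swap s₁ s₂ * π) = π := by
      rw [Equiv.swap_comm, ← mul_assoc, Equiv.swap_mul_self, one_mul]
    rwa [heq] at this
end
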